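/- arXiv:1001.3175 — 4 statements merged into one kernel-verified Lean document; each statement's English description precedes it below -/
import Mathlib

section
/- Let P be a graded poset of odd rank such that every proper interval of P is Eulerian. Then P is Eulerian. -/
open scoped Classical

/-! ## Basic notions: saturated chains, rank functions, Euler–Poincaré, Eulerian,
binomial / Sheffer / triangular posets. -/

/-- A saturated (maximal) chain from `x` to `y` in a poset, encoded as a list. -/
def IsSatChain {α : Type*} [PartialOrder α] (x y : α) (l : List α) : Prop :=
  l.Chain' (· ⋖ ·) ∧ l.head? = some x ∧ l.getLast? = some y

/-- The number of maximal chains of the interval `[x, y]`. -/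
noncomputable def chainCount {α : Type*} [PartialOrder α] (x y : α) : ℕ :=
  Nat.card {l : List α // IsSatChain x y l}

/-- `rk` is a rank function for a graded poset with `⊥`:
the bottom has rank `0` and ranks increase by one across cover relations. -/
def IsRankFunction {α : Type*} [PartialOrder α] [OrderBot α] (rk : α → ℕ) : Prop :=
  rk ⊥ = 0 ∧ ∀ x y : α, x ⋖ y → rk y = rk x + 1

/-- The interval `[x, y]` satisfies the Euler–Poincaré relation: it has as many elements
of even rank as of odd rank. -/
def EulerPoincare {α : Type*} [Fintype α] [PartialOrder α] (rk : α → ℕ) (x y : α) : Prop :=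
  (Finset.univ.filter fun z => x ≤ z ∧ z ≤ y ∧ Even (rk z)).card =
    (Finset.univ.filter fun z => x ≤ z ∧ z ≤ y ∧ ¬ Even (rk z)).card

/-- A graded poset is Eulerian if every non-singleton interval satisfies
the Euler–Poincaré relation. -/
def IsEulerian {α : Type*} [Fintype α] [PartialOrder α] (rk : α → ℕ) : Prop :=
  ∀ x y : α, x < y → EulerPoincare rk x y

/-- A binomial poset: the number of maximal chains of an interval depends only
on its length, via the factorial function `B`. -/
def IsBinomial {α : Type*} [PartialOrder α] (rk : α → ℕ) (B : ℕ → ℕ) : Prop :=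
  ∀ x y : α, x ≤ y → chainCount x y = B (rk y - rk x)

/-- A Sheffer poset: Sheffer intervals `[⊥, y]` have `D (ρ y)` maximal chains and binomial
intervals `[x, y]` with `x ≠ ⊥` have `B (ρ y - ρ x)` maximal chains. -/
def IsSheffer {α : Type*} [PartialOrder α] [OrderBot α] (rk : α → ℕ) (B D : ℕ → ℕ) : Prop :=
  (∀ y : α, chainCount ⊥ y = D (rk y)) ∧
    (∀ x y : α, x ≠ ⊥ → x ≤ y → chainCount x y = B (rk y - rk x))

/-- A triangular poset: the number of maximal chains of `[x, y]` depends only on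
`ρ x` and `ρ y`. -/
def IsTriangular {α : Type*} [PartialOrder α] (rk : α → ℕ) (B : ℕ → ℕ → ℕ) : Prop :=
  ∀ x y : α, x ≤ y → chainCount x y = B (rk x) (rk y)

/-! ## Constructions: summations, dual suspension, butterfly posets, polygon face lattices. -/

/-- The proper part of a bounded poset. -/
abbrev ProperPart (Q : Type*) [PartialOrder Q] [OrderBot Q] [OrderTop Q] : Type _ :=
  {x : Q // x ≠ ⊥ ∧ x ≠ ⊤}

/-- The summation `⊞_{i} Q i` of a family of bounded posets: identify all the minimal
elements and all the maximal elements of the disjoint union of the `Q i`. -/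
abbrev FamSum {ι : Type*} (Q : ι → Type*) [∀ i, PartialOrder (Q i)] [∀ i, OrderBot (Q i)]
    [∀ i, OrderTop (Q i)] : Type _ :=
  WithBot (WithTop ((i : ι) × ProperPart (Q i)))

/-- The `k`-summation `⊞^k Q`: identify all the minimal elements and all the maximal
elements of `k` disjoint copies of `Q`. -/
abbrev KSum (k : ℕ) (Q : Type*) [PartialOrder Q] [OrderBot Q] [OrderTop Q] : Type _ :=
  FamSum (fun _ : Fin k => Q)

/-- The rank function of a `k`-summation, induced by a rank function on `Q`. -/
def ksumRk {k : ℕ} {Q : Type*} [PartialOrder Q] [OrderBot Q] [OrderTop Q] (rk : Q → ℕ) :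
    KSum k Q → ℕ :=
  WithBot.recBotCoe 0 (WithTop.recTopCoe (rk ⊤) (fun s => rk s.2.1))

/-- The underlying type of the dual suspension minus its bottom: two new atoms together
with the proper (non-bottom) part of `P`. -/
def DSuspMid (P : Type*) [PartialOrder P] [OrderBot P] : Type _ :=
  Fin 2 ⊕ {x : P // x ≠ ⊥}

instance DSuspMid.partialOrder (P : Type*) [PartialOrder P] [OrderBot P] :
    PartialOrder (DSuspMid P) where
  le a b :=
    match a, b with
    | .inl i, .inl j => i = j
    | .inl _, .inr _ => True
    | .inr _, .inl _ => False
    | .inr x, .inr y => x ≤ y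
  le_refl a := by cases a with
    | inl i => exact rfl
    | inr x => exact le_refl x.1
  le_trans a b c hab hbc := by
    cases a with
    | inl i =>
      cases c with
      | inl k =>
        cases b with
        | inl j => exact Eq.trans (hab : i = j) (hbc : j = k)
        | inr y => exact ((hbc : False)).elim
      | inr z => trivial
    | inr x =>
      cases b with
      | inl j => exact ((hab : False)).elim
      | inr y =>
        cases c with
        | inl k => exact ((hbc : False)).elim
        | inr z => exact le_trans (α := {x : P // x ≠ ⊥}) hab hbc
  le_antisymm a b hab hba := by
    cases a with
    | inl i =>
      cases b with
      | inl j => exact congrArg Sum.inl (hab : _ = _)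
      | inr y => exact ((hba : False)).elim
    | inr x =>
      cases b with
      | inl j => exact ((hab : False)).elim
      | inr y => exact congrArg Sum.inr (le_antisymm (α := {x : P // x ≠ ⊥}) hab hba)

/-- The dual suspension `Σ*(P)`: insert two new elements between `⊥` and the atoms of `P`. -/
abbrev DSusp (P : Type*) [PartialOrder P] [OrderBot P] : Type _ :=
  WithBot (DSuspMid P)

/-- The rank function of the dual suspension induced by a rank function on `P`. -/
def dsuspRk {P : Type*} [PartialOrder P] [OrderBot P] (rk : P → ℕ) : DSusp P → ℕ :=
  WithBot.recBotCoe 0 (Sum.elim (fun _ => 1) (fun x => rk x.1 + 1))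

noncomputable instance DSuspMid.fintype (P : Type*) [PartialOrder P] [OrderBot P] [Fintype P] :
    Fintype (DSuspMid P) := by
  unfold DSuspMid; infer_instance

instance DSuspMid.orderTop (P : Type*) [PartialOrder P] [OrderBot P] [OrderTop P] [Nontrivial P] :
    OrderTop (DSuspMid P) where
  top := Sum.inr ⟨⊤, fun h => by
    rcases exists_pair_ne P with ⟨a, b, hab⟩
    have ha : a = ⊤ := le_antisymm le_top (h.le.trans bot_le)
    have hb : b = ⊤ := le_antisymm le_top (h.le.trans bot_le)
    exact hab (ha.trans hb.symm)⟩
  le_top a := by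
    cases a with
    | inl i => trivial
    | inr x => exact le_top (α := P) (a := x.1)

/-- The butterfly poset `T n` of rank `n`: a `⊥`, a `⊤`, and two elements at each rank
`1, …, n - 1`; any two elements at consecutive ranks are comparable. -/
def Butterfly (n : ℕ) : Type :=
  {p : Fin (n + 1) × Fin 2 // ((p.1 : ℕ) = 0 ∨ (p.1 : ℕ) = n) → p.2 = 0}

namespace Butterfly

instance (n : ℕ) : PartialOrder (Butterfly n) where
  le p q := p = q ∨ (p.1.1 : ℕ) < (q.1.1 : ℕ)
  le_refl p := Or.inl rfl
  le_trans p q r h₁ h₂ := by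
    rcases h₁ with rfl | h₁
    · exact h₂
    · rcases h₂ with rfl | h₂
      · exact Or.inr h₁
      · exact Or.inr (h₁.trans h₂)
  le_antisymm p q h₁ h₂ := by
    rcases h₁ with rfl | h₁
    · rfl
    · rcases h₂ with rfl | h₂
      · rfl
      · exact absurd (h₁.trans h₂) (lt_irrefl _)

instance (n : ℕ) : OrderBot (Butterfly n) where
  bot := ⟨(0, 0), fun _ => rfl⟩
  bot_le p := by
    rcases Nat.eq_zero_or_pos (p.1.1 : ℕ) with h | h
    · left
      apply Subtype.ext
      have h2 : p.1.2 = 0 := p.2 (Or.inl (by exact_mod_cast h))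
      apply Prod.ext
      · exact (Fin.ext (by simpa using h.symm))
      · exact h2.symm
    · exact Or.inr (by simpa using h)

instance (n : ℕ) : OrderTop (Butterfly n) where
  top := ⟨(Fin.last n, 0), fun _ => rfl⟩
  le_top p := by
    rcases eq_or_lt_of_le (Nat.lt_succ_iff.mp p.1.1.isLt) with h | h
    · left
      apply Subtype.ext
      have h2 : p.1.2 = 0 := p.2 (Or.inr h)
      apply Prod.ext
      · exact (Fin.ext (by simpa using h))
      · exact h2
    · exact Or.inr (by simpa using h)

instance (n : ℕ) : Fintype (Butterfly n) := by
  unfold Butterfly; exact Subtype.fintype _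

/-- The rank function of the butterfly poset. -/
def rk {n : ℕ} (p : Butterfly n) : ℕ := p.1.1

end Butterfly

/-- The middle levels (vertices and edges) of the face lattice of a `q`-gon:
`(0, i)` is the `i`-th vertex and `(1, i)` is the edge joining vertices `i` and `i + 1`. -/
def PolyMid (q : ℕ) : Type := Fin 2 × Fin q

instance PolyMid.partialOrder (q : ℕ) : PartialOrder (PolyMid q) where
  le a b := a = b ∨ (a.1 = 0 ∧ b.1 = 1 ∧ (a.2 = b.2 ∨ (a.2 : ℕ) = ((b.2 : ℕ) + 1) % q))
  le_refl a := Or.inl rfl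
  le_trans a b c h₁ h₂ := by
    rcases h₁ with rfl | h₁
    · exact h₂
    · rcases h₂ with rfl | h₂
      · exact Or.inr h₁
      · obtain ⟨hb, _⟩ := h₂
        rw [h₁.2.1] at hb
        exact absurd hb (by decide)
  le_antisymm a b h₁ h₂ := by
    rcases h₁ with rfl | h₁
    · rfl
    · rcases h₂ with rfl | h₂
      · rfl
      · obtain ⟨hb, _⟩ := h₂
        rw [h₁.2.1] at hb
        exact absurd hb (by decide)

/-- The face lattice `P_q` of a `q`-gon. -/
abbrev PolygonFaceLattice (q : ℕ) : Type := WithBot (WithTop (PolyMid q))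

noncomputable instance ProperPart.fintype (Q : Type*) [Fintype Q] [PartialOrder Q]
    [OrderBot Q] [OrderTop Q] : Fintype (ProperPart Q) :=
  Subtype.fintype _

instance WithTop.instFintypeOfFintype {X : Type*} [Fintype X] : Fintype (WithTop X) :=
  inferInstanceAs (Fintype (Option X))

instance WithBot.instFintypeOfFintype {X : Type*} [Fintype X] : Fintype (WithBot X) :=
  inferInstanceAs (Fintype (Option X))

/-!
Write `χ(x, y) = ∑_{x ≤ z ≤ y} (-1)^ρ(z)`, so that `[x, y]` is Eulerian exactly when
`χ(x, y) = 0`. Counting `∑_{x ≤ u ≤ v ≤ y} (-1)^(ρ u + ρ v)` by `u` first and by `v` first gives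
`∑_u (-1)^ρ(u) χ(u, y) = ∑_v (-1)^ρ(v) χ(x, v)`. When every proper subinterval is Eulerian only
the terms `u, v ∈ {x, y}` survive, leaving `(-1)^ρ(x) χ(x, y) + 1 = 1 + (-1)^ρ(y) χ(x, y)`;
if `ρ x` and `ρ y` have different parities this forces `χ(x, y) = 0`.
-/

open Finset

section EulerSum

variable {α : Type*} [Fintype α] [PartialOrder α] (rk : α → ℕ)

noncomputable def eulerSum (x y : α) : ℤ :=
  ∑ z ∈ univ.filter (fun z => x ≤ z ∧ z ≤ y), (-1) ^ rk z

theorem eulerPoincare_iff_eulerSum_eq_zero (x y : α) :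
    EulerPoincare rk x y ↔ eulerSum rk x y = 0 := by
  rw [EulerPoincare, eulerSum, ← sum_filter_add_sum_filter_not _ (fun z => Even (rk z)),
    sum_congr rfl fun z hz => (mem_filter.mp hz).2.neg_one_pow,
    sum_congr rfl fun z hz => (Nat.not_even_iff_odd.mp (mem_filter.mp hz).2).neg_one_pow,
    sum_const, sum_const, filter_filter, filter_filter]
  simp only [and_assoc, nsmul_eq_mul, mul_one, mul_neg, ← sub_eq_add_neg, sub_eq_zero, Nat.cast_inj]

theorem eulerSum_self (x : α) : eulerSum rk x x = (-1) ^ rk x := by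
  have hsingleton : univ.filter (fun z => x ≤ z ∧ z ≤ x) = {x} := by
    ext z
    simp [le_antisymm_iff, and_comm]
  rw [eulerSum, hsingleton, sum_singleton]

theorem sum_neg_one_pow_mul_eulerSum_comm (x y : α) :
    ∑ u ∈ univ.filter (fun u => x ≤ u ∧ u ≤ y), (-1) ^ rk u * eulerSum rk u y =
      ∑ v ∈ univ.filter (fun v => x ≤ v ∧ v ≤ y), (-1) ^ rk v * eulerSum rk x v := by
  simp_rw [eulerSum, mul_sum]
  refine sum_comm' (fun u v => ?_) |>.trans (sum_congr rfl fun v _ => sum_congr rfl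
    fun u _ => mul_comm _ _)
  simp only [mem_filter, mem_univ, true_and]
  constructor
  · rintro ⟨⟨hxu, -⟩, huv, hvy⟩
    exact ⟨⟨hxu, huv⟩, hxu.trans huv, hvy⟩
  · rintro ⟨⟨hxu, huv⟩, -, hvy⟩
    exact ⟨⟨hxu, huv.trans hvy⟩, huv, hvy⟩

theorem eulerPoincare_of_proper_of_odd {x y : α} (hodd : Odd (rk x + rk y))
    (hproper : ∀ u v : α, x ≤ u → u < v → v ≤ y → ¬(u = x ∧ v = y) → EulerPoincare rk u v) :
    EulerPoincare rk x y := by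
  rw [eulerPoincare_iff_eulerSum_eq_zero]
  by_cases hxy : x ≤ y
  swap
  · rw [eulerSum, filter_eq_empty_iff.mpr fun z _ hz => hxy (hz.1.trans hz.2), sum_empty]
  have hne : x ≠ y := by
    rintro rfl
    exact Nat.not_odd_iff_even.mpr ⟨rk x, rfl⟩ hodd
  set S := univ.filter (fun z => x ≤ z ∧ z ≤ y)
  have hmem : ∀ {z}, z ∈ S ↔ x ≤ z ∧ z ≤ y := by simp [S]
  have hx : x ∈ S := hmem.2 ⟨le_rfl, hxy⟩
  have hy : y ∈ S := hmem.2 ⟨hxy, le_rfl⟩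
  have hleft : ∀ u ∈ S, u ≠ x ∧ u ≠ y → (-1) ^ rk u * eulerSum rk u y = 0 := by
    rintro u hu ⟨hux, huy⟩
    obtain ⟨hxu, huy'⟩ := hmem.1 hu
    rw [(eulerPoincare_iff_eulerSum_eq_zero rk u y).1
      (hproper u y hxu (lt_of_le_of_ne huy' huy) le_rfl fun h => hux h.1), mul_zero]
  have hright : ∀ v ∈ S, v ≠ x ∧ v ≠ y → (-1) ^ rk v * eulerSum rk x v = 0 := by
    rintro v hv ⟨hvx, hvy⟩
    obtain ⟨hxv, hvy'⟩ := hmem.1 hv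
    rw [(eulerPoincare_iff_eulerSum_eq_zero rk x v).1
      (hproper x v le_rfl (lt_of_le_of_ne hxv (Ne.symm hvx)) hvy' fun h => hvy h.2), mul_zero]
  have hcount := sum_neg_one_pow_mul_eulerSum_comm rk x y
  rw [sum_eq_add x y hne hleft (absurd hx) (absurd hy),
    sum_eq_add x y hne hright (absurd hx) (absurd hy), eulerSum_self, eulerSum_self] at hcount
  have hsq : ∀ n, (-1 : ℤ) ^ n * (-1) ^ n = 1 := fun n => pow_mul_pow_eq_one n rfl
  have hsign : (-1 : ℤ) ^ rk y = -(-1) ^ rk x := by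
    have hprod : (-1 : ℤ) ^ rk x * (-1) ^ rk y = -1 := by rw [← pow_add, hodd.neg_one_pow]
    linear_combination (-1 : ℤ) ^ rk x * hprod - (-1 : ℤ) ^ rk y * hsq (rk x)
  rw [hsign] at hcount
  have htwice : 2 * eulerSum rk x y = 0 := by
    linear_combination (-1 : ℤ) ^ rk x * hcount - 2 * eulerSum rk x y * hsq (rk x)
  linarith

end EulerSum

/-- A graded poset of odd rank all of whose proper intervals are Eulerian
is itself Eulerian. -/
theorem statement0 {α : Type*} [Fintype α] [PartialOrder α] [BoundedOrder α]
    (rk : α → ℕ) (hrk : IsRankFunction rk) (hodd : Odd (rk ⊤))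
    (h : ∀ x y : α, x < y → ¬(x = ⊥ ∧ y = ⊤) → EulerPoincare rk x y) :
    IsEulerian rk := by
  intro x y hxy
  by_cases hxy_top : x = ⊥ ∧ y = ⊤
  · obtain ⟨rfl, rfl⟩ := hxy_top
    exact eulerPoincare_of_proper_of_odd rk (by rwa [hrk.1, zero_add])
      fun u v _ huv _ => h u v huv
  · exact h x y hxy hxy_top
end

section
/- Let P be an Eulerian binomial poset of rank 3. Then B(2)=2 and B(3)=2q for some integer q ≥ 2, and P is obtained by identifying all minimal elements and all maximal elements of face lattices P_{q_1}, …, P_{q_r} of q_i-gons with q_i ≥ 2 and q_1+…+q_r = q. -/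
open scoped Classical

/-- The face lattice `P_q` of a `q`-gon. -/
abbrev PolygonFL (q : ℕ) : Type := WithBot (WithTop (PolyMid q))

/-!
Euler–Poincaré on an interval of length two forces exactly two interior elements, so `B 2 = 2`
and the poset is thin: every atom lies below exactly two coatoms and every coatom above exactly
two atoms. On the flags (incident atom–coatom pairs, counted by `B 3`), changing the coatom and
changing the atom are therefore fixed-point-free involutions `σ` and `τ`. Every reflection
`(στ) ^ z σ` is conjugate to `σ` or `τ`, so the rotation `ρ = στ` never maps a flag `f` to a
`σ`- or `τ`-image of its own `ρ`-orbit. Consequently, in the orbit of `f` under `⟨σ, τ⟩`, the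
atoms and coatoms of `ρ ^ j f`, for `j` modulo the period `q ≥ 2` of `f`, are pairwise distinct
and incident exactly like the vertices and edges of a `q`-gon; the orbits assemble into the
summation of polygons. Double counting the flags through their atoms and through their coatoms
gives `B 3 = #atoms + #coatoms = 2 ∑ qᵢ`.
-/

namespace OrderIso

noncomputable def withBotWithTopProperPart (α : Type*) [PartialOrder α] [BoundedOrder α]
    (h : (⊥ : α) ≠ ⊤) : WithBot (WithTop (ProperPart α)) ≃o α := by
  refine OrderIso.ofSurjective (OrderEmbedding.ofMapLEIff
    (WithBot.recBotCoe ⊥ (WithTop.recTopCoe ⊤ Subtype.val)) ?_) ?_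
  · simp +contextual [WithBot.forall, WithTop.forall, Subtype.forall, h.symm, -WithBot.coe_top]
  · intro x
    by_cases hb : x = ⊥
    · exact ⟨⊥, hb.symm⟩
    by_cases ht : x = ⊤
    · exact ⟨(⊤ : WithTop (ProperPart α)), ht.symm⟩
    · exact ⟨((⟨x, hb, ht⟩ : ProperPart α) : WithTop (ProperPart α)), rfl⟩

noncomputable def properPartWithBotWithTop (β : Type*) [PartialOrder β] :
    ProperPart (WithBot (WithTop β)) ≃o β := by
  refine (OrderIso.ofSurjective (OrderEmbedding.ofMapLEIff
    (fun b : β => (⟨((b : WithTop β) : WithBot (WithTop β)), WithBot.coe_ne_bot,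
      fun h => WithTop.coe_ne_top (WithBot.coe_injective h)⟩ : ProperPart (WithBot (WithTop β))))
    fun a b => ?_) ?_).symm
  · simp [Subtype.mk_le_mk]
  · rintro ⟨(_ | _ | b), hb, ht⟩
    · exact absurd rfl hb
    · exact absurd rfl ht
    · exact ⟨b, rfl⟩

def sigmaCongrRight {ι : Type*} {α β : ι → Type*} [∀ i, LE (α i)] [∀ i, LE (β i)]
    (e : ∀ i, α i ≃o β i) : (Σ i, α i) ≃o Σ i, β i where
  toEquiv := Equiv.sigmaCongrRight fun i => (e i).toEquiv
  map_rel_iff' := by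
    rintro ⟨i, a⟩ ⟨j, b⟩
    simp only [Equiv.sigmaCongrRight_apply]
    constructor
    · rintro ⟨_, _, _, h⟩
      exact Sigma.mk_le_mk_iff.mpr ((e _).le_iff_le.mp h)
    · rintro ⟨_, _, _, h⟩
      exact Sigma.mk_le_mk_iff.mpr ((e _).le_iff_le.mpr h)

end OrderIso

section Dihedral

variable {G : Type*} [Group G] {s t : G}

theorem mul_zpow_mul_eq_zpow_neg_mul (hs : s * s = 1) (ht : t * t = 1) (z : ℤ) :
    s * (s * t) ^ z = (s * t) ^ (-z) * s := by
  have hs' : s⁻¹ = s := inv_eq_of_mul_eq_one_right hs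
  have ht' : t⁻¹ = t := inv_eq_of_mul_eq_one_right ht
  have hconj : s * (s * t) * s⁻¹ = (s * t)⁻¹ := by
    rw [mul_inv_rev, hs', ht', ← mul_assoc, hs, one_mul]
  have h := conj_zpow (a := s) (b := s * t) (i := z)
  rw [hconj, inv_zpow, ← zpow_neg, hs'] at h
  rw [h, mul_assoc _ s s, hs, mul_one]

theorem isConj_or_isConj_zpow_mul (hs : s * s = 1) (ht : t * t = 1) (z : ℤ) :
    IsConj s ((s * t) ^ z * s) ∨ IsConj t ((s * t) ^ z * s) := by
  have hs' : s⁻¹ = s := inv_eq_of_mul_eq_one_right hs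
  have hflip (z : ℤ) : s * (s * t) ^ (-z) = (s * t) ^ z * s := by
    rw [mul_zpow_mul_eq_zpow_neg_mul hs ht, neg_neg]
  obtain ⟨k, rfl | rfl⟩ := Int.even_or_odd' z
  · refine .inl (isConj_iff.mpr ⟨(s * t) ^ k, ?_⟩)
    rw [← zpow_neg, mul_assoc, hflip, ← mul_assoc, ← zpow_add, two_mul]
  · refine .inr (isConj_iff.mpr ⟨(s * t) ^ k * s, ?_⟩)
    rw [mul_inv_rev, hs', ← zpow_neg, hflip, show 2 * k + 1 = k + 1 + k by ring, zpow_add,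
      zpow_add_one]
    simp only [mul_assoc]

theorem mem_closure_pair_iff (hs : s * s = 1) (ht : t * t = 1) {g : G} :
    g ∈ Subgroup.closure {s, t} ↔ ∃ z : ℤ, g = (s * t) ^ z ∨ g = (s * t) ^ z * s := by
  have hs' : s⁻¹ = s := inv_eq_of_mul_eq_one_right hs
  have hflip (z : ℤ) : s * (s * t) ^ z = (s * t) ^ (-z) * s :=
    mul_zpow_mul_eq_zpow_neg_mul hs ht z
  constructor
  · intro hg
    induction hg using Subgroup.closure_induction with
    | mem x hx =>
      rcases hx with rfl | rfl
      · exact ⟨0, .inr (by simp)⟩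
      · exact ⟨-1, .inr (by rw [zpow_neg_one, mul_inv_rev, hs', mul_assoc, hs, mul_one,
          inv_eq_of_mul_eq_one_right ht])⟩
    | one => exact ⟨0, .inl (by simp)⟩
    | mul x y _ _ hx hy =>
      obtain ⟨a, rfl | rfl⟩ := hx <;> obtain ⟨b, rfl | rfl⟩ := hy
      · exact ⟨a + b, .inl (zpow_add _ a b).symm⟩
      · exact ⟨a + b, .inr (by rw [zpow_add, mul_assoc])⟩
      · exact ⟨a - b, .inr (by
          rw [mul_assoc, hflip, ← mul_assoc, ← zpow_add, sub_eq_add_neg])⟩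
      · exact ⟨a - b, .inl (by
          rw [mul_assoc, ← mul_assoc s, hflip, mul_assoc, hs, mul_one, ← zpow_add,
            sub_eq_add_neg])⟩
    | inv x _ hx =>
      obtain ⟨a, rfl | rfl⟩ := hx
      · exact ⟨-a, .inl (zpow_neg _ a).symm⟩
      · exact ⟨a, .inr (by rw [mul_inv_rev, hs', ← zpow_neg, hflip, neg_neg])⟩
  · have hst : s * t ∈ Subgroup.closure {s, t} :=
      mul_mem (Subgroup.subset_closure (by simp)) (Subgroup.subset_closure (by simp))
    rintro ⟨z, rfl | rfl⟩
    · exact zpow_mem hst z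
    · exact mul_mem (zpow_mem hst z) (Subgroup.subset_closure (by simp))

end Dihedral

namespace Equiv.Perm

variable {F : Type*} {s t : Perm F}

theorem apply_ne_self_of_isConj {a b : Perm F} (hab : IsConj a b) (ha : ∀ x, a x ≠ x) (x : F) :
    b x ≠ x := by
  obtain ⟨c, rfl⟩ := isConj_iff.mp hab
  intro hx
  apply ha (c⁻¹ x)
  simpa [mul_apply] using congrArg (⇑c⁻¹) hx

theorem zpow_apply_ne_apply_zpow_apply_left (hs : s * s = 1) (ht : t * t = 1)
    (hsx : ∀ x, s x ≠ x) (htx : ∀ x, t x ≠ x) (a b : ℤ) (x : F) :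
    ((s * t) ^ a) x ≠ s (((s * t) ^ b) x) := by
  intro h
  have hfix : ((s * t) ^ (b + a) * s) (s x) = s x := by
    rw [mul_apply, ← mul_apply s s, hs, one_apply, zpow_add, mul_apply, h, ← mul_apply s,
      mul_zpow_mul_eq_zpow_neg_mul hs ht, mul_apply, ← mul_apply (_ ^ b), ← zpow_add,
      add_neg_cancel, zpow_zero, one_apply]
  rcases isConj_or_isConj_zpow_mul hs ht (b + a) with hc | hc
  exacts [apply_ne_self_of_isConj hc hsx _ hfix, apply_ne_self_of_isConj hc htx _ hfix]

theorem zpow_apply_ne_apply_zpow_apply_right (hs : s * s = 1) (ht : t * t = 1)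
    (hsx : ∀ x, s x ≠ x) (htx : ∀ x, t x ≠ x) (a b : ℤ) (x : F) :
    ((s * t) ^ a) x ≠ t (((s * t) ^ b) x) := by
  convert zpow_apply_ne_apply_zpow_apply_left hs ht hsx htx a (1 + b) x using 1
  rw [zpow_one_add, mul_apply, mul_apply, ← mul_apply s s, hs, one_apply]

open MulAction in
theorem zpow_apply_eq_zpow_apply_iff (g : Perm F) (x : F) {a b : ℤ} :
    (g ^ a) x = (g ^ b) x ↔ a ≡ b [ZMOD period g x] := by
  have h : (g ^ b) x = (g ^ a) ((g ^ (b - a)) x) := by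
    rw [← mul_apply, ← zpow_add, add_sub_cancel]
  rw [h, (g ^ a).injective.eq_iff, eq_comm, ← Equiv.Perm.smul_def, zpow_smul_eq_iff_period_dvd,
    Int.modEq_iff_dvd]

open MulAction in
theorem zpow_natCast_apply_eq_iff (g : Perm F) (x : F) {j m : ℕ} (hj : j < period g x) :
    (g ^ (j : ℤ)) x = (g ^ (m : ℤ)) x ↔ j = m % period g x := by
  rw [zpow_apply_eq_zpow_apply_iff, Int.natCast_modEq_iff, Nat.ModEq, Nat.mod_eq_of_lt hj]

open MulAction in
theorem exists_lt_period_zpow_apply_eq [Finite F] (g : Perm F) (x : F) (z : ℤ) :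
    ∃ j < period g x, (g ^ (j : ℤ)) x = (g ^ z) x := by
  have hpos : (0 : ℤ) < period g x := by
    exact_mod_cast period_pos_of_orderOf_pos (orderOf_pos g) x
  have hlt := Int.emod_lt_of_pos z hpos
  refine ⟨(z % period g x).toNat, by omega, ?_⟩
  rw [zpow_apply_eq_zpow_apply_iff, Int.toNat_of_nonneg (Int.emod_nonneg z hpos.ne')]
  exact Int.mod_modEq z _

end Equiv.Perm

section FiberSwap

variable {F β : Type*} {p : F → β}

theorem existsUnique_ne_of_card_fiber_eq_two {x : F} (hp : Nat.card {y // p y = p x} = 2) :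
    ∃! y, y ≠ x ∧ p y = p x := by
  obtain ⟨u, v, huv, huniv⟩ := Nat.card_eq_two_iff.mp hp
  have hmem (w : {y // p y = p x}) : w = u ∨ w = v := by
    simpa using huniv.ge (Set.mem_univ w)
  rcases hmem ⟨x, rfl⟩ with rfl | rfl
  · refine ⟨v, ⟨fun h => huv (Subtype.ext h.symm), v.2⟩, fun y ⟨hyx, hy⟩ => ?_⟩
    rcases hmem ⟨y, hy⟩ with h | h
    · exact absurd (congrArg Subtype.val h) hyx
    · exact congrArg Subtype.val h
  · refine ⟨u, ⟨fun h => huv (Subtype.ext h), u.2⟩, fun y ⟨hyx, hy⟩ => ?_⟩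
    rcases hmem ⟨y, hy⟩ with h | h
    · exact congrArg Subtype.val h
    · exact absurd (congrArg Subtype.val h) hyx

variable (hp : ∀ x, ∃! y, y ≠ x ∧ p y = p x)

noncomputable def fiberPartner (x : F) : F := (hp x).exists.choose

theorem fiberPartner_ne (x : F) : fiberPartner hp x ≠ x := (hp x).exists.choose_spec.1

theorem apply_fiberPartner (x : F) : p (fiberPartner hp x) = p x := (hp x).exists.choose_spec.2

theorem eq_or_eq_fiberPartner {x y : F} (h : p y = p x) : y = x ∨ y = fiberPartner hp x :=
  or_iff_not_imp_left.mpr fun hyx => (hp x).unique ⟨hyx, h⟩ (hp x).exists.choose_spec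

theorem fiberPartner_involutive : Function.Involutive (fiberPartner hp) := fun x =>
  ((eq_or_eq_fiberPartner hp (apply_fiberPartner hp x).symm).resolve_left
    (fiberPartner_ne hp x).symm).symm

noncomputable def fiberSwap : Equiv.Perm F := (fiberPartner_involutive hp).toPerm

theorem fiberSwap_mul_self : fiberSwap hp * fiberSwap hp = 1 :=
  Equiv.ext (fiberPartner_involutive hp)

end FiberSwap

section RankFunction

variable {α : Type*} [PartialOrder α] [OrderBot α] {rk : α → ℕ}

theorem IsRankFunction.rk_add_one_eq_of_isSatChain (hrk : IsRankFunction rk) :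
    ∀ {l : List α} {x y : α}, IsSatChain x y l → rk y + 1 = rk x + l.length
  | [], _, _, h => by simp [IsSatChain] at h
  | [a], x, y, ⟨_, hx, hy⟩ => by
    obtain rfl : a = x := by simpa using hx
    obtain rfl : a = y := by simpa using hy
    rfl
  | a :: b :: l, x, y, ⟨hc, hx, hy⟩ => by
    obtain rfl : a = x := by simpa using hx
    replace hc := List.isChain_cons_cons.mp hc
    have ih := hrk.rk_add_one_eq_of_isSatChain (x := b) (y := y)
      ⟨hc.2, rfl, by simpa [List.getLast?_cons_cons] using hy⟩
    simp only [List.length_cons] at ih ⊢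
    have := hrk.2 a b hc.1
    omega

theorem IsRankFunction.chainCount_eq_card_of_rk_eq_add_two (hrk : IsRankFunction rk) {x y : α}
    (h : rk y = rk x + 2) : chainCount x y = Nat.card {z // x ⋖ z ∧ z ⋖ y} := by
  refine (Nat.card_eq_of_bijective (fun z => ⟨[x, z.1, y], ?chain, rfl, rfl⟩) ⟨?_, ?_⟩).symm
  case chain => exact List.isChain_cons_cons.mpr ⟨z.2.1, List.isChain_pair.mpr z.2.2⟩
  · intro z w hzw
    simpa [Subtype.ext_iff] using hzw
  · rintro ⟨l, hl⟩
    have hlen := hrk.rk_add_one_eq_of_isSatChain hl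
    obtain ⟨a, b, c, rfl⟩ := List.length_eq_three.mp (by omega : l.length = 3)
    obtain ⟨hc, ha, hc'⟩ := hl
    obtain rfl : a = x := by simpa using ha
    obtain rfl : c = y := by simpa using hc'
    obtain ⟨hab, hbc⟩ := List.isChain_cons_cons.mp hc
    exact ⟨⟨b, hab, List.isChain_pair.mp hbc⟩, rfl⟩

theorem IsRankFunction.chainCount_eq_card_of_rk_eq_add_three (hrk : IsRankFunction rk)
    {x y : α} (h : rk y = rk x + 3) :
    chainCount x y = Nat.card {p : α × α // x ⋖ p.1 ∧ p.1 ⋖ p.2 ∧ p.2 ⋖ y} := by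
  refine (Nat.card_eq_of_bijective (fun p => ⟨[x, p.1.1, p.1.2, y], ?chain, rfl, rfl⟩)
    ⟨?_, ?_⟩).symm
  case chain =>
    exact List.isChain_cons_cons.mpr ⟨p.2.1,
      List.isChain_cons_cons.mpr ⟨p.2.2.1, List.isChain_pair.mpr p.2.2.2⟩⟩
  · intro p p' hpp'
    simpa [Subtype.ext_iff, Prod.ext_iff] using hpp'
  · rintro ⟨l, hl⟩
    have hlen := hrk.rk_add_one_eq_of_isSatChain hl
    obtain ⟨a, b, c, d, rfl⟩ : ∃ a b c d, l = [a, b, c, d] := by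
      match l, (by omega : l.length = 4) with
      | [a, b, c, d], _ => exact ⟨a, b, c, d, rfl⟩
    obtain ⟨hc, ha, hd⟩ := hl
    obtain rfl : a = x := by simpa using ha
    obtain rfl : d = y := by simpa using hd
    obtain ⟨hab, hbcd⟩ := List.isChain_cons_cons.mp hc
    obtain ⟨hbc, hcd⟩ := List.isChain_cons_cons.mp hbcd
    exact ⟨⟨(b, c), hab, hbc, List.isChain_pair.mp hcd⟩, rfl⟩

variable [Finite α]

theorem IsRankFunction.strictMono (hrk : IsRankFunction rk) : StrictMono rk := by
  intro x y hxy
  induction y using WellFoundedLT.induction with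
  | _ y ih =>
    obtain ⟨z, hxz, hzy⟩ := exists_le_covBy_of_lt hxy
    rw [hrk.2 z y hzy]
    rcases hxz.eq_or_lt with rfl | hxz
    · omega
    · have := ih z hzy.lt hxz
      omega

theorem IsRankFunction.covBy_iff (hrk : IsRankFunction rk) {x y : α} :
    x ⋖ y ↔ x < y ∧ rk y = rk x + 1 := by
  refine ⟨fun h => ⟨h.lt, hrk.2 x y h⟩, fun ⟨hxy, hr⟩ => ⟨hxy, fun z hxz hzy => ?_⟩⟩
  have := hrk.strictMono hxz
  have := hrk.strictMono hzy
  omega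

theorem IsRankFunction.eq_of_le_of_rk_eq (hrk : IsRankFunction rk) {x y : α} (h : x ≤ y)
    (hr : rk x = rk y) : x = y :=
  h.eq_of_not_lt fun hlt => (hrk.strictMono hlt).ne hr

end RankFunction

def IsThin {α : Type*} [PartialOrder α] (rk : α → ℕ) : Prop :=
  ∀ x y : α, x ≤ y → rk y = rk x + 2 → Nat.card {z // x ⋖ z ∧ z ⋖ y} = 2

section LengthTwoInterval

variable {α : Type*} [Fintype α] [PartialOrder α] [OrderBot α] {rk : α → ℕ}
  {x y : α}

theorem IsRankFunction.filter_rk_ne_eq_pair (hrk : IsRankFunction rk) (hxy : x ≤ y)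
    (hr : rk y = rk x + 2) :
    Finset.univ.filter (fun z => x ≤ z ∧ z ≤ y ∧ ¬ rk z = rk x + 1) = {x, y} := by
  ext z
  simp only [Finset.mem_filter, Finset.mem_univ, true_and, Finset.mem_insert,
    Finset.mem_singleton]
  constructor
  · rintro ⟨hxz, hzy, hz⟩
    have := hrk.strictMono.monotone hxz
    have := hrk.strictMono.monotone hzy
    rcases (by omega : rk x = rk z ∨ rk z = rk y) with h | h
    · exact .inl (hrk.eq_of_le_of_rk_eq hxz h).symm
    · exact .inr (hrk.eq_of_le_of_rk_eq hzy h)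
  · rintro (rfl | rfl)
    · exact ⟨le_rfl, hxy, by omega⟩
    · exact ⟨hxy, le_rfl, by omega⟩

theorem IsRankFunction.card_filter_rk_eq_add_one (hrk : IsRankFunction rk)
    (hr : rk y = rk x + 2) :
    (Finset.univ.filter fun z => x ≤ z ∧ z ≤ y ∧ rk z = rk x + 1).card =
      Nat.card {z // x ⋖ z ∧ z ⋖ y} := by
  rw [Nat.card_eq_fintype_card, Fintype.card_subtype]
  congr 1
  ext z
  simp only [Finset.mem_filter, Finset.mem_univ, true_and, hrk.covBy_iff]
  constructor
  · rintro ⟨hxz, hzy, hz⟩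
    exact ⟨⟨hxz.lt_of_ne (by rintro rfl; omega), hz⟩,
      hzy.lt_of_ne (by rintro rfl; omega), by omega⟩
  · rintro ⟨⟨hxz, hz⟩, hzy, -⟩
    exact ⟨hxz.le, hzy.le, hz⟩

theorem IsEulerian.isThin (hrk : IsRankFunction rk) (hE : IsEulerian rk) : IsThin rk := by
  intro x y hxy hr
  have hxy' : x < y := hxy.lt_of_ne (by rintro rfl; omega)
  have hparity (z : α) (hxz : x ≤ z) (hzy : z ≤ y) :
      Even (rk z) ↔ (Even (rk x) ↔ ¬ rk z = rk x + 1) := by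
    have := hrk.strictMono.monotone hxz
    have := hrk.strictMono.monotone hzy
    rcases (by omega : rk z = rk x ∨ rk z = rk x + 1 ∨ rk z = rk x + 2) with h | h | h <;>
      simp [h, Nat.even_add_one, parity_simps]
  have hEP := hE x y hxy'
  unfold EulerPoincare at hEP
  rw [← hrk.card_filter_rk_eq_add_one hr, ← Finset.card_pair hxy'.ne,
    ← hrk.filter_rk_ne_eq_pair hxy hr]
  by_cases hx : Even (rk x)
  · convert hEP.symm using 2 <;> refine Finset.filter_congr fun z _ =>
      and_congr_right fun hxz => and_congr_right fun hzy => ?_ <;>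
      simp [hparity z hxz hzy, hx]
  · convert hEP using 2 <;> refine Finset.filter_congr fun z _ =>
      and_congr_right fun hxz => and_congr_right fun hzy => ?_ <;>
      simp [hparity z hxz hzy, hx]

end LengthTwoInterval

instance PolyMid.instFinite (q : ℕ) : Finite (PolyMid q) :=
  inferInstanceAs (Finite (Fin 2 × Fin q))

theorem PolyMid.card (q : ℕ) : Nat.card (PolyMid q) = 2 * q := by
  change Nat.card (Fin 2 × Fin q) = 2 * q
  simp

abbrev IncidentPair (α : Type*) [PartialOrder α] [BoundedOrder α] : Type _ :=
  {p : α × α // ⊥ ⋖ p.1 ∧ p.1 ⋖ p.2 ∧ p.2 ⋖ ⊤}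

namespace IncidentPair

variable {α : Type*} [PartialOrder α] [BoundedOrder α]

def atom (f : IncidentPair α) : α := f.1.1

def coatom (f : IncidentPair α) : α := f.1.2

theorem bot_covBy_atom (f : IncidentPair α) : ⊥ ⋖ f.atom := f.2.1

theorem atom_covBy_coatom (f : IncidentPair α) : f.atom ⋖ f.coatom := f.2.2.1

theorem coatom_covBy_top (f : IncidentPair α) : f.coatom ⋖ ⊤ := f.2.2.2

theorem ext_atom_coatom {f g : IncidentPair α} (h₁ : f.atom = g.atom)
    (h₂ : f.coatom = g.coatom) : f = g :=
  Subtype.ext (Prod.ext h₁ h₂)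

end IncidentPair

structure IsThinOfRankThree {α : Type*} [PartialOrder α] [BoundedOrder α] (rk : α → ℕ) :
    Prop where
  isRankFunction : IsRankFunction rk
  rk_top : rk ⊤ = 3
  isThin : IsThin rk

namespace IsThinOfRankThree

open IncidentPair MulAction

variable {α : Type*} [PartialOrder α] [BoundedOrder α] {rk : α → ℕ}

theorem bot_ne_top (hP : IsThinOfRankThree rk) : (⊥ : α) ≠ ⊤ := fun h => by
  simpa [h, hP.rk_top] using hP.isRankFunction.1

variable [Fintype α]

theorem bot_covBy_iff (hP : IsThinOfRankThree rk) {x : α} : ⊥ ⋖ x ↔ rk x = 1 := by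
  rw [hP.isRankFunction.covBy_iff, hP.isRankFunction.1]
  refine ⟨And.right, fun h => ⟨bot_lt_iff_ne_bot.mpr ?_, h⟩⟩
  rintro rfl
  simp [hP.isRankFunction.1] at h

theorem covBy_top_iff (hP : IsThinOfRankThree rk) {x : α} : x ⋖ ⊤ ↔ rk x = 2 := by
  rw [hP.isRankFunction.covBy_iff, hP.rk_top]
  refine ⟨fun h => by omega, fun h => ⟨lt_top_iff_ne_top.mpr ?_, by omega⟩⟩
  rintro rfl
  simp [hP.rk_top] at h

theorem bot_covBy_or_covBy_top (hP : IsThinOfRankThree rk) {x : α} (hb : x ≠ ⊥)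
    (ht : x ≠ ⊤) : ⊥ ⋖ x ∨ x ⋖ ⊤ := by
  have h₁ := hP.isRankFunction.strictMono (bot_lt_iff_ne_bot.mpr hb)
  have h₂ := hP.isRankFunction.strictMono (lt_top_iff_ne_top.mpr ht)
  rw [hP.isRankFunction.1] at h₁
  rw [hP.rk_top] at h₂
  rw [hP.bot_covBy_iff, hP.covBy_top_iff]
  omega

theorem ne_top_of_bot_covBy (hP : IsThinOfRankThree rk) {a : α} (ha : ⊥ ⋖ a) : a ≠ ⊤ := by
  rintro rfl
  simpa [hP.rk_top] using hP.bot_covBy_iff.mp ha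

theorem ne_bot_of_covBy_top (hP : IsThinOfRankThree rk) {c : α} (hc : c ⋖ ⊤) : c ≠ ⊥ := by
  rintro rfl
  simpa [hP.isRankFunction.1] using hP.covBy_top_iff.mp hc

theorem le_iff_eq_of_bot_covBy (hP : IsThinOfRankThree rk) {a b : α} (ha : ⊥ ⋖ a)
    (hb : ⊥ ⋖ b) : a ≤ b ↔ a = b :=
  ⟨fun h => hP.isRankFunction.eq_of_le_of_rk_eq h
    ((hP.bot_covBy_iff.mp ha).trans (hP.bot_covBy_iff.mp hb).symm), le_of_eq⟩

theorem le_iff_eq_of_covBy_top (hP : IsThinOfRankThree rk) {a b : α} (ha : a ⋖ ⊤)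
    (hb : b ⋖ ⊤) : a ≤ b ↔ a = b :=
  ⟨fun h => hP.isRankFunction.eq_of_le_of_rk_eq h
    ((hP.covBy_top_iff.mp ha).trans (hP.covBy_top_iff.mp hb).symm), le_of_eq⟩

theorem not_le_of_covBy_top_of_bot_covBy (hP : IsThinOfRankThree rk) {a c : α} (hc : c ⋖ ⊤)
    (ha : ⊥ ⋖ a) : ¬ c ≤ a := fun h => by
  have := hP.isRankFunction.strictMono.monotone h
  rw [hP.covBy_top_iff.mp hc, hP.bot_covBy_iff.mp ha] at this
  omega

theorem covBy_of_le (hP : IsThinOfRankThree rk) {a c : α} (ha : ⊥ ⋖ a) (hc : c ⋖ ⊤)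
    (h : a ≤ c) : a ⋖ c := by
  have ha1 := hP.bot_covBy_iff.mp ha
  have hc2 := hP.covBy_top_iff.mp hc
  exact hP.isRankFunction.covBy_iff.mpr ⟨h.lt_of_ne (by rintro rfl; omega), by omega⟩

theorem card_covBy_top_of_bot_covBy (hP : IsThinOfRankThree rk) {a : α} (ha : ⊥ ⋖ a) :
    Nat.card {c // a ⋖ c ∧ c ⋖ ⊤} = 2 :=
  hP.isThin a ⊤ le_top (by rw [hP.rk_top, hP.bot_covBy_iff.mp ha])

theorem card_bot_covBy_of_covBy_top (hP : IsThinOfRankThree rk) {c : α} (hc : c ⋖ ⊤) :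
    Nat.card {a // ⊥ ⋖ a ∧ a ⋖ c} = 2 :=
  hP.isThin ⊥ c bot_le (by rw [hP.isRankFunction.1, hP.covBy_top_iff.mp hc])

theorem existsUnique_ne_atom_eq (hP : IsThinOfRankThree rk) (f : IncidentPair α) :
    ∃! g : IncidentPair α, g ≠ f ∧ g.atom = f.atom := by
  refine existsUnique_ne_of_card_fiber_eq_two ?_
  rw [← hP.card_covBy_top_of_bot_covBy f.bot_covBy_atom]
  exact Nat.card_congr
    { toFun := fun g => ⟨g.1.coatom, by simpa only [g.2] using g.1.atom_covBy_coatom,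
        g.1.coatom_covBy_top⟩
      invFun := fun c => ⟨⟨(f.atom, c.1), f.bot_covBy_atom, c.2⟩, rfl⟩
      left_inv := fun g => Subtype.ext (Subtype.ext (Prod.ext g.2.symm rfl))
      right_inv := fun _ => rfl }

theorem existsUnique_ne_coatom_eq (hP : IsThinOfRankThree rk) (f : IncidentPair α) :
    ∃! g : IncidentPair α, g ≠ f ∧ g.coatom = f.coatom := by
  refine existsUnique_ne_of_card_fiber_eq_two ?_
  rw [← hP.card_bot_covBy_of_covBy_top f.coatom_covBy_top]
  exact Nat.card_congr
    { toFun := fun g => ⟨g.1.atom, g.1.bot_covBy_atom,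
        by simpa only [g.2] using g.1.atom_covBy_coatom⟩
      invFun := fun a => ⟨⟨(a.1, f.coatom), a.2.1, a.2.2, f.coatom_covBy_top⟩, rfl⟩
      left_inv := fun g => Subtype.ext (Subtype.ext (Prod.ext rfl g.2.symm))
      right_inv := fun _ => rfl }

noncomputable def flipCoatom (hP : IsThinOfRankThree rk) : Equiv.Perm (IncidentPair α) :=
  fiberSwap hP.existsUnique_ne_atom_eq

noncomputable def flipAtom (hP : IsThinOfRankThree rk) : Equiv.Perm (IncidentPair α) :=
  fiberSwap hP.existsUnique_ne_coatom_eq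

noncomputable def rotation (hP : IsThinOfRankThree rk) : Equiv.Perm (IncidentPair α) :=
  hP.flipCoatom * hP.flipAtom

noncomputable def flagGroup (hP : IsThinOfRankThree rk) : Subgroup (Equiv.Perm (IncidentPair α)) :=
  Subgroup.closure {hP.flipCoatom, hP.flipAtom}

theorem atom_flipCoatom (hP : IsThinOfRankThree rk)
    (f : IncidentPair α) : (hP.flipCoatom f).atom = f.atom :=
  apply_fiberPartner hP.existsUnique_ne_atom_eq f

theorem coatom_flipAtom (hP : IsThinOfRankThree rk)
    (f : IncidentPair α) : (hP.flipAtom f).coatom = f.coatom :=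
  apply_fiberPartner hP.existsUnique_ne_coatom_eq f

theorem flipCoatom_apply_ne (hP : IsThinOfRankThree rk)
    (f : IncidentPair α) : hP.flipCoatom f ≠ f :=
  fiberPartner_ne hP.existsUnique_ne_atom_eq f

theorem flipAtom_apply_ne (hP : IsThinOfRankThree rk) (f : IncidentPair α) : hP.flipAtom f ≠ f :=
  fiberPartner_ne hP.existsUnique_ne_coatom_eq f

theorem flipCoatom_mul_self (hP : IsThinOfRankThree rk) : hP.flipCoatom * hP.flipCoatom = 1 :=
  fiberSwap_mul_self hP.existsUnique_ne_atom_eq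

theorem flipAtom_mul_self (hP : IsThinOfRankThree rk) : hP.flipAtom * hP.flipAtom = 1 :=
  fiberSwap_mul_self hP.existsUnique_ne_coatom_eq

theorem eq_or_eq_flipCoatom (hP : IsThinOfRankThree rk)
    {f g : IncidentPair α} (h : g.atom = f.atom) :
    g = f ∨ g = hP.flipCoatom f :=
  eq_or_eq_fiberPartner hP.existsUnique_ne_atom_eq h

theorem eq_or_eq_flipAtom (hP : IsThinOfRankThree rk)
    {f g : IncidentPair α} (h : g.coatom = f.coatom) :
    g = f ∨ g = hP.flipAtom f :=
  eq_or_eq_fiberPartner hP.existsUnique_ne_coatom_eq h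

theorem flipCoatom_zpow_add_one (hP : IsThinOfRankThree rk) (z : ℤ) (f : IncidentPair α) :
    hP.flipCoatom ((hP.rotation ^ (z + 1)) f) = hP.flipAtom ((hP.rotation ^ z) f) := by
  rw [← mul_self_zpow, Equiv.Perm.mul_apply, rotation, Equiv.Perm.mul_apply,
    ← Equiv.Perm.mul_apply hP.flipCoatom, flipCoatom_mul_self, Equiv.Perm.one_apply]

theorem zpow_apply_ne_flipCoatom (hP : IsThinOfRankThree rk) (a b : ℤ) (f : IncidentPair α) :
    (hP.rotation ^ a) f ≠ hP.flipCoatom ((hP.rotation ^ b) f) :=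
  Equiv.Perm.zpow_apply_ne_apply_zpow_apply_left hP.flipCoatom_mul_self hP.flipAtom_mul_self
    hP.flipCoatom_apply_ne hP.flipAtom_apply_ne a b f

theorem zpow_apply_ne_flipAtom (hP : IsThinOfRankThree rk) (a b : ℤ) (f : IncidentPair α) :
    (hP.rotation ^ a) f ≠ hP.flipAtom ((hP.rotation ^ b) f) :=
  Equiv.Perm.zpow_apply_ne_apply_zpow_apply_right hP.flipCoatom_mul_self hP.flipAtom_mul_self
    hP.flipCoatom_apply_ne hP.flipAtom_apply_ne a b f

theorem atom_zpow_eq_atom_zpow_iff (hP : IsThinOfRankThree rk) {a b : ℤ} {f : IncidentPair α} :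
    ((hP.rotation ^ a) f).atom = ((hP.rotation ^ b) f).atom ↔
      (hP.rotation ^ a) f = (hP.rotation ^ b) f :=
  ⟨fun h => (hP.eq_or_eq_flipCoatom h).resolve_right (hP.zpow_apply_ne_flipCoatom a b f),
    congrArg atom⟩

theorem coatom_zpow_eq_coatom_zpow_iff (hP : IsThinOfRankThree rk) {a b : ℤ}
    {f : IncidentPair α} :
    ((hP.rotation ^ a) f).coatom = ((hP.rotation ^ b) f).coatom ↔
      (hP.rotation ^ a) f = (hP.rotation ^ b) f :=
  ⟨fun h => (hP.eq_or_eq_flipAtom h).resolve_right (hP.zpow_apply_ne_flipAtom a b f),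
    congrArg coatom⟩

theorem le_coatom_iff (hP : IsThinOfRankThree rk) {a : α} (ha : ⊥ ⋖ a) (g : IncidentPair α) :
    a ≤ g.coatom ↔ a = g.atom ∨ a = (hP.flipAtom g).atom := by
  constructor
  · intro h
    let g' : IncidentPair α := ⟨(a, g.coatom), ha, hP.covBy_of_le ha g.coatom_covBy_top h,
      g.coatom_covBy_top⟩
    rcases hP.eq_or_eq_flipAtom (f := g) (g := g') rfl with hg | hg
    exacts [.inl (congrArg atom hg), .inr (congrArg atom hg)]
  · rintro (rfl | rfl)
    · exact g.atom_covBy_coatom.le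
    · exact (hP.coatom_flipAtom g ▸ (hP.flipAtom g).atom_covBy_coatom).le

theorem rotation_apply_ne (hP : IsThinOfRankThree rk) (f : IncidentPair α) :
    hP.rotation f ≠ f := by
  intro h
  have hswap : hP.flipAtom f = hP.flipCoatom f := by
    calc hP.flipAtom f = hP.flipCoatom (hP.rotation f) := by
          rw [rotation, Equiv.Perm.mul_apply, ← Equiv.Perm.mul_apply hP.flipCoatom,
            flipCoatom_mul_self, Equiv.Perm.one_apply]
      _ = hP.flipCoatom f := by rw [h]
  refine hP.flipAtom_apply_ne f (ext_atom_coatom ?_ ?_)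
  · exact (congrArg atom hswap).trans (hP.atom_flipCoatom f)
  · exact hP.coatom_flipAtom f

theorem two_le_period (hP : IsThinOfRankThree rk)
    (f : IncidentPair α) : 2 ≤ period hP.rotation f := by
  have hpos := period_pos_of_orderOf_pos (orderOf_pos hP.rotation) f
  have hne : period hP.rotation f ≠ 1 := fun h => hP.rotation_apply_ne f (period_eq_one_iff.mp h)
  omega

/-- Vertex `j` and edge `j` are the atom and the coatom of `ρ ^ j f`. Since `ρ` replaces the atom
within the current coatom, edge `j` contains the vertices `j` and `j + 1`, as in `PolyMid`. -/
noncomputable def polygonFace (hP : IsThinOfRankThree rk)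
    (f : IncidentPair α) (u : PolyMid (period hP.rotation f)) : α :=
  if u.1 = 0 then ((hP.rotation ^ ((u.2 : ℕ) : ℤ)) f).atom
  else ((hP.rotation ^ ((u.2 : ℕ) : ℤ)) f).coatom

theorem polygonFace_le_polygonFace_iff (hP : IsThinOfRankThree rk)
    (f : IncidentPair α) {u v : PolyMid (period hP.rotation f)} :
    hP.polygonFace f u ≤ hP.polygonFace f v ↔ u ≤ v := by
  obtain ⟨d, j⟩ := u
  obtain ⟨e, k⟩ := v
  have hsucc : (hP.flipAtom ((hP.rotation ^ (k : ℤ)) f)).atom =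
      ((hP.rotation ^ ((k + 1 : ℕ) : ℤ)) f).atom := by
    rw [Nat.cast_succ, ← flipCoatom_zpow_add_one, atom_flipCoatom]
  change _ ↔ ((d, j) : Fin 2 × Fin (period hP.rotation f)) = (e, k) ∨
    (d = 0 ∧ e = 1 ∧ (j = k ∨ (j : ℕ) = ((k : ℕ) + 1) % period hP.rotation f))
  fin_cases d <;> fin_cases e <;>
    simp only [polygonFace, Fin.zero_eta, Fin.mk_one, Fin.isValue, ↓reduceIte, one_ne_zero,
      zero_ne_one, Prod.mk.injEq, Fin.ext_iff, true_and, false_and, and_false, and_self, or_false,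
      false_or, or_self, iff_false]
  · rw [hP.le_iff_eq_of_bot_covBy (bot_covBy_atom _) (bot_covBy_atom _),
      atom_zpow_eq_atom_zpow_iff, Equiv.Perm.zpow_natCast_apply_eq_iff _ _ j.2,
      Nat.mod_eq_of_lt k.2]
  · rw [hP.le_coatom_iff (bot_covBy_atom _), hsucc, atom_zpow_eq_atom_zpow_iff,
      atom_zpow_eq_atom_zpow_iff, Equiv.Perm.zpow_natCast_apply_eq_iff _ _ j.2,
      Equiv.Perm.zpow_natCast_apply_eq_iff _ _ j.2, Nat.mod_eq_of_lt k.2]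
  · exact hP.not_le_of_covBy_top_of_bot_covBy (coatom_covBy_top _) (bot_covBy_atom _)
  · rw [hP.le_iff_eq_of_covBy_top (coatom_covBy_top _) (coatom_covBy_top _),
      coatom_zpow_eq_coatom_zpow_iff, Equiv.Perm.zpow_natCast_apply_eq_iff _ _ j.2,
      Nat.mod_eq_of_lt k.2]

noncomputable def component (hP : IsThinOfRankThree rk)
    (f : IncidentPair α) : orbitRel.Quotient hP.flagGroup (IncidentPair α) :=
  Quotient.mk _ f

theorem component_apply (hP : IsThinOfRankThree rk)
    {w : Equiv.Perm (IncidentPair α)} (hw : w ∈ hP.flagGroup)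
    (f : IncidentPair α) : hP.component (w f) = hP.component f :=
  Quotient.sound ⟨⟨w, hw⟩, rfl⟩

theorem component_zpow_apply (hP : IsThinOfRankThree rk) (z : ℤ) (f : IncidentPair α) :
    hP.component ((hP.rotation ^ z) f) = hP.component f :=
  hP.component_apply (zpow_mem (mul_mem (Subgroup.subset_closure (by simp))
    (Subgroup.subset_closure (by simp))) z) f

theorem component_eq_of_atom_eq (hP : IsThinOfRankThree rk)
    {f g : IncidentPair α} (h : g.atom = f.atom) :
    hP.component g = hP.component f := by
  rcases hP.eq_or_eq_flipCoatom h with rfl | rfl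
  exacts [rfl, hP.component_apply (Subgroup.subset_closure (by simp)) f]

theorem component_eq_of_coatom_eq (hP : IsThinOfRankThree rk)
    {f g : IncidentPair α} (h : g.coatom = f.coatom) :
    hP.component g = hP.component f := by
  rcases hP.eq_or_eq_flipAtom h with rfl | rfl
  exacts [rfl, hP.component_apply (Subgroup.subset_closure (by simp)) f]

theorem component_eq_of_atom_le_coatom (hP : IsThinOfRankThree rk)
    {f g : IncidentPair α} (h : f.atom ≤ g.coatom) :
    hP.component f = hP.component g := by
  let fg : IncidentPair α := ⟨(f.atom, g.coatom), f.bot_covBy_atom,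
    hP.covBy_of_le f.bot_covBy_atom g.coatom_covBy_top h, g.coatom_covBy_top⟩
  exact (hP.component_eq_of_atom_eq (f := f) (g := fg) rfl).symm.trans
    (hP.component_eq_of_coatom_eq (f := g) (g := fg) rfl)

theorem component_eq_of_face_le (hP : IsThinOfRankThree rk) {f g : IncidentPair α} {x y : α}
    (hx : x = f.atom ∨ x = f.coatom) (hy : y = g.atom ∨ y = g.coatom) (hxy : x ≤ y) :
    hP.component f = hP.component g := by
  rcases hx with rfl | rfl <;> rcases hy with rfl | rfl
  · exact hP.component_eq_of_atom_eq
      ((hP.le_iff_eq_of_bot_covBy f.bot_covBy_atom g.bot_covBy_atom).mp hxy)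
  · exact hP.component_eq_of_atom_le_coatom hxy
  · exact absurd hxy (hP.not_le_of_covBy_top_of_bot_covBy f.coatom_covBy_top g.bot_covBy_atom)
  · exact hP.component_eq_of_coatom_eq
      ((hP.le_iff_eq_of_covBy_top f.coatom_covBy_top g.coatom_covBy_top).mp hxy)

theorem exists_zpow_of_component_eq (hP : IsThinOfRankThree rk)
    {f g : IncidentPair α} (h : hP.component g = hP.component f) :
    ∃ z : ℤ, g = (hP.rotation ^ z) f ∨ g = hP.flipCoatom ((hP.rotation ^ z) f) := by
  obtain ⟨⟨w, hw⟩, hwf⟩ := orbitRel_apply.mp (Quotient.exact h)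
  obtain rfl : w f = g := hwf
  obtain ⟨z, rfl | rfl⟩ :=
    (mem_closure_pair_iff hP.flipCoatom_mul_self hP.flipAtom_mul_self).mp hw
  · exact ⟨z, .inl rfl⟩
  · refine ⟨-z, .inr ?_⟩
    rw [← Equiv.Perm.mul_apply, rotation, mul_zpow_mul_eq_zpow_neg_mul hP.flipCoatom_mul_self
      hP.flipAtom_mul_self, neg_neg]

theorem exists_atom_eq_of_component_eq (hP : IsThinOfRankThree rk) {f g : IncidentPair α}
    (h : hP.component g = hP.component f) : ∃ z : ℤ, g.atom = ((hP.rotation ^ z) f).atom := by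
  obtain ⟨z, rfl | rfl⟩ := hP.exists_zpow_of_component_eq h
  exacts [⟨z, rfl⟩, ⟨z, hP.atom_flipCoatom _⟩]

theorem exists_coatom_eq_of_component_eq (hP : IsThinOfRankThree rk) {f g : IncidentPair α}
    (h : hP.component g = hP.component f) :
    ∃ z : ℤ, g.coatom = ((hP.rotation ^ z) f).coatom := by
  obtain ⟨z, rfl | rfl⟩ := hP.exists_zpow_of_component_eq h
  · exact ⟨z, rfl⟩
  · refine ⟨z - 1, ?_⟩
    rw [← sub_add_cancel z 1, flipCoatom_zpow_add_one, coatom_flipAtom, sub_add_cancel]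

noncomputable def numComponents (hP : IsThinOfRankThree rk) : ℕ :=
  Nat.card (orbitRel.Quotient hP.flagGroup (IncidentPair α))

noncomputable def componentEquivFin (hP : IsThinOfRankThree rk) :
    orbitRel.Quotient hP.flagGroup (IncidentPair α) ≃ Fin hP.numComponents :=
  Finite.equivFin _

noncomputable def base (hP : IsThinOfRankThree rk) (i : Fin hP.numComponents) : IncidentPair α :=
  (hP.componentEquivFin.symm i).out

noncomputable def polygonSize (hP : IsThinOfRankThree rk)
    (i : Fin hP.numComponents) : ℕ := period hP.rotation (hP.base i)

theorem component_base (hP : IsThinOfRankThree rk) (i : Fin hP.numComponents) :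
    hP.component (hP.base i) = hP.componentEquivFin.symm i :=
  Quotient.out_eq _

theorem eq_of_component_base_eq (hP : IsThinOfRankThree rk) {i j : Fin hP.numComponents}
    (h : hP.component (hP.base i) = hP.component (hP.base j)) : i = j :=
  hP.componentEquivFin.symm.injective (by rwa [component_base, component_base] at h)

theorem exists_component_eq_base (hP : IsThinOfRankThree rk) (g : IncidentPair α) :
    ∃ i, hP.component g = hP.component (hP.base i) :=
  ⟨hP.componentEquivFin (hP.component g), by rw [component_base, Equiv.symm_apply_apply]⟩

theorem polygonFace_eq (hP : IsThinOfRankThree rk)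
    (f : IncidentPair α) (u : PolyMid (period hP.rotation f)) :
    hP.polygonFace f u = ((hP.rotation ^ ((u.2 : ℕ) : ℤ)) f).atom ∨
      hP.polygonFace f u = ((hP.rotation ^ ((u.2 : ℕ) : ℤ)) f).coatom := by
  unfold polygonFace
  split_ifs
  exacts [.inl rfl, .inr rfl]

noncomputable def sigmaFace (hP : IsThinOfRankThree rk)
    (s : Σ i, PolyMid (hP.polygonSize i)) : α :=
  hP.polygonFace (hP.base s.1) s.2

theorem sigmaFace_le_sigmaFace_iff (hP : IsThinOfRankThree rk)
    {s t : Σ i, PolyMid (hP.polygonSize i)} :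
    hP.sigmaFace s ≤ hP.sigmaFace t ↔ s ≤ t := by
  obtain ⟨i, u⟩ := s
  obtain ⟨j, v⟩ := t
  by_cases hij : i = j
  · subst hij
    rw [Sigma.mk_le_mk_iff]
    exact hP.polygonFace_le_polygonFace_iff _
  · refine iff_of_false (fun h => hij (hP.eq_of_component_base_eq ?_))
      fun h => hij (Sigma.le_def.mp h).1
    rw [← hP.component_zpow_apply ((u.2 : ℕ) : ℤ) (hP.base i),
      ← hP.component_zpow_apply ((v.2 : ℕ) : ℤ) (hP.base j)]
    exact hP.component_eq_of_face_le (hP.polygonFace_eq _ u) (hP.polygonFace_eq _ v) h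

theorem sigmaFace_ne_bot (hP : IsThinOfRankThree rk)
    (s : Σ i, PolyMid (hP.polygonSize i)) : hP.sigmaFace s ≠ ⊥ := by
  rcases hP.polygonFace_eq _ s.2 with h | h <;> rw [sigmaFace, h]
  exacts [(bot_covBy_atom _).ne', hP.ne_bot_of_covBy_top (coatom_covBy_top _)]

theorem sigmaFace_ne_top (hP : IsThinOfRankThree rk)
    (s : Σ i, PolyMid (hP.polygonSize i)) : hP.sigmaFace s ≠ ⊤ := by
  rcases hP.polygonFace_eq _ s.2 with h | h <;> rw [sigmaFace, h]
  exacts [hP.ne_top_of_bot_covBy (bot_covBy_atom _), (coatom_covBy_top _).ne]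

theorem exists_sigmaFace_eq (hP : IsThinOfRankThree rk) {x : α} (hb : x ≠ ⊥) (ht : x ≠ ⊤) :
    ∃ s, hP.sigmaFace s = x := by
  rcases hP.bot_covBy_or_covBy_top hb ht with hx | hx
  · obtain ⟨⟨c, hc⟩⟩ : Nonempty {c // x ⋖ c ∧ c ⋖ ⊤} :=
      (Nat.card_pos_iff.mp (by rw [hP.card_covBy_top_of_bot_covBy hx]; norm_num)).1
    obtain ⟨i, hi⟩ := hP.exists_component_eq_base ⟨(x, c), hx, hc⟩
    obtain ⟨z, hz⟩ := hP.exists_atom_eq_of_component_eq hi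
    obtain ⟨j, hj, hjz⟩ := Equiv.Perm.exists_lt_period_zpow_apply_eq hP.rotation (hP.base i) z
    refine ⟨⟨i, (0, ⟨j, hj⟩)⟩, ?_⟩
    simp only [sigmaFace, polygonFace, if_true]
    rw [hjz]
    exact hz.symm
  · obtain ⟨⟨a, ha⟩⟩ : Nonempty {a // ⊥ ⋖ a ∧ a ⋖ x} :=
      (Nat.card_pos_iff.mp (by rw [hP.card_bot_covBy_of_covBy_top hx]; norm_num)).1
    obtain ⟨i, hi⟩ := hP.exists_component_eq_base ⟨(a, x), ha.1, ha.2, hx⟩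
    obtain ⟨z, hz⟩ := hP.exists_coatom_eq_of_component_eq hi
    obtain ⟨j, hj, hjz⟩ := Equiv.Perm.exists_lt_period_zpow_apply_eq hP.rotation (hP.base i) z
    refine ⟨⟨i, (1, ⟨j, hj⟩)⟩, ?_⟩
    simp only [sigmaFace, polygonFace, one_ne_zero, if_false]
    rw [hjz]
    exact hz.symm

noncomputable def properPartOrderIso (hP : IsThinOfRankThree rk) :
    ProperPart α ≃o Σ i, PolyMid (hP.polygonSize i) :=
  (OrderIso.ofSurjective (OrderEmbedding.ofMapLEIff
    (fun s => (⟨hP.sigmaFace s, hP.sigmaFace_ne_bot s, hP.sigmaFace_ne_top s⟩ : ProperPart α))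
    fun _ _ => hP.sigmaFace_le_sigmaFace_iff) fun x => by
      obtain ⟨s, hs⟩ := hP.exists_sigmaFace_eq x.2.1 x.2.2
      exact ⟨s, Subtype.ext hs⟩).symm

theorem card_incidentPair_eq_two_mul_card_atoms (hP : IsThinOfRankThree rk) :
    Nat.card (IncidentPair α) = 2 * Nat.card {a : α // ⊥ ⋖ a} := by
  rw [Nat.card_congr (β := Σ a : {a : α // ⊥ ⋖ a}, {c // a.1 ⋖ c ∧ c ⋖ ⊤})
    { toFun := fun f => ⟨⟨f.atom, f.bot_covBy_atom⟩, f.coatom, f.atom_covBy_coatom,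
        f.coatom_covBy_top⟩
      invFun := fun s => ⟨(s.1, s.2), s.1.2, s.2.2⟩
      left_inv := fun _ => rfl
      right_inv := fun _ => rfl }, Nat.card_sigma]
  rw [Finset.sum_congr rfl fun a _ => hP.card_covBy_top_of_bot_covBy a.2, Finset.sum_const,
    smul_eq_mul, Finset.card_univ, Nat.card_eq_fintype_card, mul_comm]

theorem card_incidentPair_eq_two_mul_card_coatoms (hP : IsThinOfRankThree rk) :
    Nat.card (IncidentPair α) = 2 * Nat.card {c : α // c ⋖ ⊤} := by
  rw [Nat.card_congr (β := Σ c : {c : α // c ⋖ ⊤}, {a : α // ⊥ ⋖ a ∧ a ⋖ c.1})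
    { toFun := fun f => ⟨⟨f.coatom, f.coatom_covBy_top⟩, f.atom, f.bot_covBy_atom,
        f.atom_covBy_coatom⟩
      invFun := fun s => ⟨(s.2, s.1), s.2.2.1, s.2.2.2, s.1.2⟩
      left_inv := fun _ => rfl
      right_inv := fun _ => rfl }, Nat.card_sigma]
  rw [Finset.sum_congr rfl fun c _ => hP.card_bot_covBy_of_covBy_top c.2, Finset.sum_const,
    smul_eq_mul, Finset.card_univ, Nat.card_eq_fintype_card, mul_comm]

theorem card_properPart (hP : IsThinOfRankThree rk) :
    Nat.card (ProperPart α) = Nat.card {a : α // ⊥ ⋖ a} + Nat.card {c : α // c ⋖ ⊤} := by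
  have hdisj : Disjoint (fun a : α => ⊥ ⋖ a) (fun c => c ⋖ ⊤) := fun _ ha hc x hx => by
    have h₁ := hP.bot_covBy_iff.mp (ha x hx)
    have h₂ := hP.covBy_top_iff.mp (hc x hx)
    omega
  rw [Nat.card_congr (Equiv.subtypeEquivRight fun x =>
      ⟨fun h => hP.bot_covBy_or_covBy_top h.1 h.2, fun h => h.elim
        (fun ha => ⟨ha.ne', hP.ne_top_of_bot_covBy ha⟩)
        (fun hc => ⟨hP.ne_bot_of_covBy_top hc, hc.ne⟩)⟩),
    Nat.card_eq_fintype_card, Fintype.card_subtype_or_disjoint _ _ hdisj,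
    Nat.card_eq_fintype_card, Nat.card_eq_fintype_card]

theorem card_incidentPair (hP : IsThinOfRankThree rk) :
    Nat.card (IncidentPair α) = 2 * ∑ i, hP.polygonSize i := by
  have h := (Nat.card_congr hP.properPartOrderIso.toEquiv).symm
  rw [hP.card_properPart, Nat.card_sigma] at h
  simp only [PolyMid.card, ← Finset.mul_sum] at h
  have := hP.card_incidentPair_eq_two_mul_card_atoms
  have := hP.card_incidentPair_eq_two_mul_card_coatoms
  omega

theorem nonempty_incidentPair (hP : IsThinOfRankThree rk) : Nonempty (IncidentPair α) := by
  obtain ⟨a, ha, -⟩ := exists_covBy_le_of_lt (bot_le.lt_of_ne hP.bot_ne_top)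
  obtain ⟨⟨c, hc⟩⟩ : Nonempty {c // a ⋖ c ∧ c ⋖ ⊤} :=
    (Nat.card_pos_iff.mp (by rw [hP.card_covBy_top_of_bot_covBy ha]; norm_num)).1
  exact ⟨⟨(a, c), ha, hc⟩⟩

theorem two_le_sum_polygonSize (hP : IsThinOfRankThree rk) : 2 ≤ ∑ i, hP.polygonSize i := by
  obtain ⟨f⟩ := hP.nonempty_incidentPair
  exact (hP.two_le_period _).trans
    (Finset.single_le_sum (fun i _ => Nat.zero_le (hP.polygonSize i))
      (Finset.mem_univ (hP.componentEquivFin (hP.component f))))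

theorem chainCount_bot_top (hP : IsThinOfRankThree rk) :
    chainCount (⊥ : α) ⊤ = 2 * ∑ i, hP.polygonSize i := by
  rw [hP.isRankFunction.chainCount_eq_card_of_rk_eq_add_three
    (by rw [hP.rk_top, hP.isRankFunction.1]), ← hP.card_incidentPair]

theorem chainCount_bot_of_covBy_top (hP : IsThinOfRankThree rk) {c : α} (hc : c ⋖ ⊤) :
    chainCount ⊥ c = 2 := by
  rw [hP.isRankFunction.chainCount_eq_card_of_rk_eq_add_two
    (by rw [hP.covBy_top_iff.mp hc, hP.isRankFunction.1]), hP.card_bot_covBy_of_covBy_top hc]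

theorem nonempty_orderIso_famSum (hP : IsThinOfRankThree rk) :
    Nonempty (α ≃o FamSum fun i => PolygonFL (hP.polygonSize i)) :=
  ⟨(OrderIso.withBotWithTopProperPart α hP.bot_ne_top).symm.trans
    (hP.properPartOrderIso.trans (OrderIso.sigmaCongrRight fun _ =>
      (OrderIso.properPartWithBotWithTop _).symm)).withTopCongr.withBotCongr⟩

end IsThinOfRankThree

/-- An Eulerian binomial poset of rank `3` has `B 2 = 2`, `B 3 = 2 q` with
`q ≥ 2`, and is a summation of face lattices of polygons. -/
theorem statement2 {α : Type*} [Fintype α] [PartialOrder α] [BoundedOrder α]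
    (rk : α → ℕ) (B : ℕ → ℕ) (hrk : IsRankFunction rk) (hB : IsBinomial rk B)
    (hE : IsEulerian rk) (hrank : rk ⊤ = 3) :
    B 2 = 2 ∧ ∃ q : ℕ, 2 ≤ q ∧ B 3 = 2 * q ∧
      ∃ (r : ℕ) (qs : Fin r → ℕ), (∀ i, 2 ≤ qs i) ∧ (∑ i, qs i) = q ∧
        Nonempty (α ≃o FamSum fun i => PolygonFL (qs i)) := by
  have hP : IsThinOfRankThree rk := ⟨hrk, hrank, hE.isThin hrk⟩
  obtain ⟨f⟩ := hP.nonempty_incidentPair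
  have hB2 := hB ⊥ f.coatom bot_le
  rw [hP.chainCount_bot_of_covBy_top f.coatom_covBy_top, hrk.1,
    hP.covBy_top_iff.mp f.coatom_covBy_top] at hB2
  have hB3 := hB ⊥ ⊤ bot_le
  rw [hP.chainCount_bot_top, hrk.1, hrank] at hB3
  exact ⟨hB2.symm, _, hP.two_le_sum_polygonSize, hB3.symm, _, _,
    fun i => hP.two_le_period _, rfl, hP.nonempty_orderIso_famSum⟩
end

section
/- Let P be a finite binomial poset of rank n with factorial function B(k) = 2^{k-1} for 1 ≤ k ≤ n. Then P is isomorphic to the butterfly poset T_n. -/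
open scoped Classical

/-- The face lattice `P_q` of a `q`-gon. -/
abbrev PolygonFaces (q : ℕ) : Type := WithBot (WithTop (PolyMid q))

/-!
Splitting a maximal chain of `[x, y]` after its first step gives
`chainCount x y = ∑_{x ⋖ w} chainCount w y`, and dually at the top. With `B k = 2 ^ (k - 1)`
all summands of `chainCount x ⊤ = 2 ^ (n - rk x - 1)` equal `2 ^ (n - rk x - 2)`, so every element
of rank at most `n - 2` has exactly two upper covers; dually every element of rank at least `2`
has exactly two lower covers. By induction on `j`, rank `j ∈ [1, n - 1]` has exactly two
elements and each element of rank `j + 1` covers both of them. Hence `x < y ↔ rk x < rk y`: the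
poset is an ordinal sum of antichains of sizes `1, 2, …, 2, 1`, exactly like `T n`.
-/
section SatChain

open OrderDual

variable {α : Type*} [PartialOrder α] {x y w a : α} {l t : List α}

theorem isSatChain_iff :
    IsSatChain x y l ↔ l.IsChain (· ⋖ ·) ∧ l.head? = some x ∧ l.getLast? = some y :=
  Iff.rfl

theorem isSatChain_cons_cons_iff :
    IsSatChain x y (a :: w :: t) ↔ a = x ∧ a ⋖ w ∧ IsSatChain w y (w :: t) := by
  simp only [isSatChain_iff, List.isChain_cons_cons, List.head?_cons, Option.some.injEq,
    List.getLast?_cons_cons, true_and]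
  tauto

theorem IsSatChain.exists_eq_cons_cons (hl : IsSatChain x y l) (hxy : x ≠ y) :
    ∃ w t, l = x :: w :: t := by
  obtain ⟨-, hh, hg⟩ := hl
  match l, hh, hg with
  | [a], hh, hg => simp_all
  | a :: w :: t, hh, _ => exact ⟨w, t, by simp_all⟩

theorem IsSatChain.nodup (hl : IsSatChain x y l) : l.Nodup :=
  (List.isChain_iff_pairwise.mp (hl.1.imp fun _ _ h => h.lt)).imp ne_of_lt

instance [Finite α] : Finite {l : List α // IsSatChain x y l} := by
  cases nonempty_fintype α
  exact Finite.of_injective (fun l => (⟨l.1, l.2.nodup⟩ : {l : List α // l.Nodup}))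
    fun l l' h => Subtype.ext (congrArg Subtype.val h :)

theorem isSatChain_toDual_iff :
    IsSatChain (α := αᵒᵈ) (toDual y) (toDual x) (l.reverse.map toDual) ↔ IsSatChain x y l := by
  simp only [isSatChain_iff, List.isChain_map, List.isChain_reverse, List.head?_map,
    List.head?_reverse, List.getLast?_map, List.getLast?_reverse, Option.map_eq_some_iff,
    toDual_inj, exists_eq_right, toDual_covBy_toDual_iff]
  tauto

end SatChain

section ChainCount

open Finset OrderDual

variable {α : Type*} [PartialOrder α] {x y w : α} {l : List α}

theorem IsSatChain.cons (hxw : x ⋖ w) (hl : IsSatChain w y l) : IsSatChain x y (x :: l) := by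
  match l, hl with
  | [], hl => simp [isSatChain_iff] at hl
  | a :: t, hl =>
    obtain rfl : a = w := by simpa using hl.2.1
    exact isSatChain_cons_cons_iff.2 ⟨rfl, hxw, hl⟩

theorem chainCount_toDual : chainCount (toDual y) (toDual x) = chainCount x y :=
  Nat.card_congr <| (Equiv.subtypeEquiv
    ⟨fun l => l.reverse.map toDual, fun l => (l.map ofDual).reverse, fun l => by simp,
      fun l => by simp⟩
    fun _ => isSatChain_toDual_iff.symm).symm

variable [Fintype α]

theorem chainCount_eq_sum_covBy (hxy : x ≠ y) :
    chainCount x y = ∑ w with x ⋖ w, chainCount w y := by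
  rw [Finset.sum_subtype (p := (x ⋖ ·)) _ (fun w => by simp)]
  unfold chainCount
  rw [← Nat.card_sigma]
  let f : (Σ w : {w // x ⋖ w}, {l // IsSatChain w.1 y l}) → {l // IsSatChain x y l} :=
    fun p => ⟨x :: p.2.1, p.2.2.cons p.1.2⟩
  refine (Nat.card_eq_of_bijective f ⟨fun p q hpq => ?_, fun l => ?_⟩).symm
  · have hl : p.2.1 = q.2.1 := List.cons_injective (congrArg Subtype.val hpq)
    refine Sigma.subtype_ext (Subtype.ext ?_) hl
    simpa [hl, q.2.2.2.1] using p.2.2.2.1.symm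
  · obtain ⟨w, t, hl⟩ := l.2.exists_eq_cons_cons hxy
    obtain ⟨-, hxw, hwy⟩ := isSatChain_cons_cons_iff.1 (hl ▸ l.2)
    exact ⟨⟨⟨w, hxw⟩, ⟨w :: t, hwy⟩⟩, Subtype.ext hl.symm⟩

theorem chainCount_eq_sum_covBy_left (hxy : x ≠ y) :
    chainCount x y = ∑ w with w ⋖ y, chainCount x w := by
  rw [← chainCount_toDual, chainCount_eq_sum_covBy (by simpa using hxy.symm)]
  refine Finset.sum_nbij' ofDual toDual ?_ ?_ ?_ ?_ ?_ <;> simp [chainCount_toDual]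

end ChainCount

theorem Finset.card_eq_two_of_sum_eq_pow_succ {ι : Type*} {s : Finset ι} {f : ι → ℕ} {m : ℕ}
    (hsum : ∑ i ∈ s, f i = 2 ^ (m + 1)) (hf : ∀ i ∈ s, f i = 2 ^ m) : s.card = 2 := by
  rw [Finset.sum_const_nat hf, pow_succ'] at hsum
  exact Nat.eq_of_mul_eq_mul_right (Nat.two_pow_pos m) hsum

namespace IsRankFunction

variable {α : Type*} [Fintype α] [PartialOrder α] [OrderBot α] {rk : α → ℕ} {x y : α}

theorem strictMono_s3 (hrk : IsRankFunction rk) : StrictMono rk := by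
  let := Fintype.toLocallyFiniteOrder (α := α)
  exact (strictMono_iff_forall_covBy rk).2 fun a b h => by rw [hrk.2 a b h]; omega

theorem covBy_of_lt (hrk : IsRankFunction rk) (hxy : x < y) (h : rk y = rk x + 1) : x ⋖ y :=
  ⟨hxy, fun _ hxz hzy => by have := hrk.strictMono_s3 hxz; have := hrk.strictMono_s3 hzy; omega⟩

theorem eq_of_le_of_rk_eq_s3 (hrk : IsRankFunction rk) (hxy : x ≤ y) (h : rk x = rk y) : x = y :=
  hxy.eq_or_lt.resolve_right fun hlt => (hrk.strictMono_s3 hlt).ne h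

theorem rk_eq_zero_iff (hrk : IsRankFunction rk) : rk x = 0 ↔ x = ⊥ :=
  ⟨fun h => (hrk.eq_of_le_of_rk_eq_s3 bot_le (hrk.1.trans h.symm)).symm, fun h => h ▸ hrk.1⟩

theorem rk_eq_rk_top_iff [OrderTop α] (hrk : IsRankFunction rk) : rk x = rk ⊤ ↔ x = ⊤ :=
  ⟨hrk.eq_of_le_of_rk_eq_s3 le_top, fun h => h ▸ rfl⟩

theorem rk_le_rk_top [OrderTop α] (hrk : IsRankFunction rk) (x : α) : rk x ≤ rk ⊤ :=
  hrk.strictMono_s3.monotone le_top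

end IsRankFunction

namespace IsBinomial

open Finset

variable {α : Type*} [Fintype α] [PartialOrder α] [BoundedOrder α] {rk : α → ℕ} {B : ℕ → ℕ}
  {n : ℕ} (hrk : IsRankFunction rk) (hB : IsBinomial rk B) (hrank : rk ⊤ = n)
  (hfact : ∀ k, 1 ≤ k → k ≤ n → B k = 2 ^ (k - 1))
include hrk hB hrank hfact

theorem chainCount_eq_two_pow {x y : α} (hxy : x < y) :
    chainCount x y = 2 ^ (rk y - rk x - 1) := by
  have hlt := hrk.strictMono_s3 hxy
  have hle := hrk.rk_le_rk_top y
  rw [hB x y hxy.le, hfact _ (by omega) (by omega)]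

theorem card_covBy_eq_two {x : α} (hx : rk x + 2 ≤ n) : #{w | x ⋖ w} = 2 := by
  have hlt {y : α} (hy : rk y < n) : y < ⊤ := lt_top_iff_ne_top.2 fun h => by simp_all
  refine card_eq_two_of_sum_eq_pow_succ (f := (chainCount · ⊤)) (m := n - rk x - 2) ?_
    fun w hw => ?_
  · rw [← chainCount_eq_sum_covBy (hlt (by omega)).ne,
      chainCount_eq_two_pow hrk hB hrank hfact (hlt (by omega)), hrank]
    exact congrArg _ (by omega)
  · have hw : rk w = rk x + 1 := hrk.2 x w (by simpa using hw)
    rw [chainCount_eq_two_pow hrk hB hrank hfact (hlt (by omega)), hrank, hw]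
    exact congrArg _ (by omega)

theorem card_covBy_left_eq_two {z : α} (hz : 2 ≤ rk z) : #{w | w ⋖ z} = 2 := by
  have hlt {y : α} (hy : 0 < rk y) : ⊥ < y := bot_lt_iff_ne_bot.2 fun h => by simp_all [hrk.1]
  refine card_eq_two_of_sum_eq_pow_succ (f := chainCount ⊥) (m := rk z - 2) ?_ fun w hw => ?_
  · rw [← chainCount_eq_sum_covBy_left (hlt (by omega)).ne,
      chainCount_eq_two_pow hrk hB hrank hfact (hlt (by omega)), hrk.1]
    exact congrArg _ (by omega)
  · have hw : rk z = rk w + 1 := hrk.2 w z (by simpa using hw)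
    rw [chainCount_eq_two_pow hrk hB hrank hfact (hlt (by omega)), hrk.1]
    exact congrArg _ (by omega)

theorem covBy_of_card_level_eq_two {j : ℕ} (hj : #{x | rk x = j} = 2) (h1 : 1 ≤ j) {x z : α}
    (hx : rk x = j) (hz : rk z = j + 1) : x ⋖ z := by
  have hsub : ({w | w ⋖ z} : Finset α) ⊆ ({x | rk x = j} : Finset α) := fun w hw => by
    simp only [mem_filter, mem_univ, true_and] at hw ⊢
    have := hrk.2 w z hw
    omega
  have heq := eq_of_subset_of_card_le hsub <| by
    rw [hj, card_covBy_left_eq_two hrk hB hrank hfact (by omega)]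
  have hxz : x ∈ ({w | w ⋖ z} : Finset α) := by rw [heq]; simpa using hx
  simpa using hxz

theorem card_level_eq_two {j : ℕ} (h1 : 1 ≤ j) (hj : j < n) : #{x | rk x = j} = 2 := by
  induction j, h1 using Nat.le_induction with
  | base =>
    have hatoms : ({x | rk x = 1} : Finset α) = ({x | ⊥ ⋖ x} : Finset α) := by
      ext x
      simp only [mem_filter, mem_univ, true_and]
      refine ⟨fun hx => hrk.covBy_of_lt (bot_lt_iff_ne_bot.2 ?_) (by rw [hx, hrk.1]),
        fun h => by rw [hrk.2 _ _ h, hrk.1]⟩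
      rintro rfl
      simp [hrk.1] at hx
    rw [hatoms]
    exact card_covBy_eq_two hrk hB hrank hfact (by rw [hrk.1]; omega)
  | succ j h1 ih =>
    obtain ⟨x, hx⟩ : ({x | rk x = j} : Finset α).Nonempty := by
      rw [← card_pos, ih (by omega)]; omega
    replace hx : rk x = j := by simpa using hx
    have hlevel : ({z | rk z = j + 1} : Finset α) = ({w | x ⋖ w} : Finset α) := by
      ext z
      simp only [mem_filter, mem_univ, true_and]
      exact ⟨covBy_of_card_level_eq_two hrk hB hrank hfact (ih (by omega)) h1 hx,
        fun h => by rw [hrk.2 _ _ h, hx]⟩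
    rw [hlevel]
    exact card_covBy_eq_two hrk hB hrank hfact (by omega)

theorem lt_of_rk_eq_succ {x z : α} (h : rk z = rk x + 1) : x < z := by
  rcases Nat.eq_zero_or_pos (rk x) with h0 | h0
  · rw [hrk.rk_eq_zero_iff.1 h0]
    exact bot_lt_iff_ne_bot.2 fun hz => by simp [hz, hrk.1] at h
  rcases (hrk.rk_le_rk_top z).eq_or_lt with hn | hn
  · rw [hrk.rk_eq_rk_top_iff.1 hn]
    exact lt_top_iff_ne_top.2 fun hx => by rw [hx] at h; omega
  · exact (covBy_of_card_level_eq_two hrk hB hrank hfact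
      (card_level_eq_two hrk hB hrank hfact h0 (by omega)) h0 rfl h).lt

theorem lt_iff_rk_lt {x y : α} : x < y ↔ rk x < rk y := by
  refine ⟨fun h => hrk.strictMono_s3 h, fun h => ?_⟩
  suffices ∀ k, rk x + 1 ≤ k → ∀ y : α, rk y = k → x < y from this _ h y rfl
  intro k hk
  induction k, hk using Nat.le_induction with
  | base => exact fun y hy => lt_of_rk_eq_succ hrk hB hrank hfact hy
  | succ k hk ih =>
    intro y hy
    have hy0 : ⊥ < y := bot_lt_iff_ne_bot.2 fun hy' => by rw [hy', hrk.1] at hy; omega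
    obtain ⟨w, -, hwy⟩ := exists_le_covBy_of_lt hy0
    exact (ih w (by have := hrk.2 w y hwy; omega)).trans hwy.lt

theorem card_level (j : ℕ) :
    #{x | rk x = j} = if n < j then 0 else if j = 0 ∨ j = n then 1 else 2 := by
  split_ifs with hnj hj
  · exact card_eq_zero.2 <| filter_eq_empty_iff.2 fun x _ hx => by
      have := hrk.rk_le_rk_top x
      omega
  · rcases hj with rfl | rfl
    · exact card_eq_one.2 ⟨⊥, by ext; simp [hrk.rk_eq_zero_iff]⟩
    · exact card_eq_one.2 ⟨⊤, by ext; simp [← hrank, hrk.rk_eq_rk_top_iff]⟩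
  · exact card_level_eq_two hrk hB hrank hfact (by omega) (by omega)

end IsBinomial

theorem nonempty_orderIso_of_card_fiber {α β γ : Type*} [PartialOrder α] [PartialOrder β] [LT γ]
    [Finite α] [Finite β] (f : α → γ) (g : β → γ) (hf : ∀ x y, x ≤ y ↔ x = y ∨ f x < f y)
    (hg : ∀ x y, x ≤ y ↔ x = y ∨ g x < g y)
    (hcard : ∀ c, Nat.card {x // f x = c} = Nat.card {y // g y = c}) : Nonempty (α ≃o β) := by
  let e : α ≃ β := Equiv.ofFiberEquiv fun c => (Finite.card_eq.1 (hcard c)).some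
  have he (x : α) : g (e x) = f x := Equiv.ofFiberEquiv_map _ x
  refine ⟨{ toEquiv := e, map_rel_iff' := fun {x y} => ?_ }⟩
  rw [hg, hf, he, he, e.injective.eq_iff]

namespace Butterfly

variable {n : ℕ}

theorem le_iff_eq_or_rk_lt {p q : Butterfly n} : p ≤ q ↔ p = q ∨ p.rk < q.rk := Iff.rfl

def levelEquiv {j : ℕ} (hj : j ≤ n) :
    {p : Butterfly n // p.rk = j} ≃ {i : Fin 2 // j = 0 ∨ j = n → i = 0} where
  toFun p := ⟨p.1.1.2, fun h => p.1.2 (by rw [← p.2] at h; exact h)⟩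
  invFun i := ⟨⟨(⟨j, by omega⟩, i.1), i.2⟩, rfl⟩
  left_inv := by
    rintro ⟨⟨⟨⟨k, hk⟩, i⟩, hp⟩, rfl⟩
    rfl
  right_inv _ := rfl

theorem card_level (j : ℕ) : Fintype.card {p : Butterfly n // p.rk = j} =
    if n < j then 0 else if j = 0 ∨ j = n then 1 else 2 := by
  split_ifs with hnj hj
  · refine Fintype.card_eq_zero_iff.2 ⟨fun p => ?_⟩
    have hp : (p.1.1.1 : ℕ) = j := p.2
    have := p.1.1.1.2
    omega
  · rw [Fintype.card_congr (levelEquiv (not_lt.1 hnj))]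
    simp [hj]
  · rw [Fintype.card_congr (levelEquiv (not_lt.1 hnj))]
    simp [hj]

end Butterfly

/-- A binomial poset of rank `n` with `B k = 2 ^ (k - 1)` is isomorphic to
the butterfly poset `T n`. -/
theorem statement3 {α : Type*} [Fintype α] [PartialOrder α] [BoundedOrder α]
    (rk : α → ℕ) (B : ℕ → ℕ) (n : ℕ) (hrk : IsRankFunction rk) (hB : IsBinomial rk B)
    (hrank : rk ⊤ = n) (hfact : ∀ k, 1 ≤ k → k ≤ n → B k = 2 ^ (k - 1)) :
    Nonempty (α ≃o Butterfly n) := by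
  have hle (x y : α) : x ≤ y ↔ x = y ∨ rk x < rk y := by
    rw [le_iff_eq_or_lt, hB.lt_iff_rk_lt hrk hrank hfact, eq_comm]
  have hcard (j : ℕ) :
      Nat.card {x // rk x = j} = Nat.card {p : Butterfly n // p.rk = j} := by
    rw [Nat.card_eq_fintype_card, Nat.card_eq_fintype_card, Butterfly.card_level,
      Fintype.card_subtype, hB.card_level hrk hrank hfact]
  exact nonempty_orderIso_of_card_fiber rk Butterfly.rk hle
    (fun _ _ => Butterfly.le_iff_eq_or_rk_lt) hcard
end

section
/- Let P and P' be Eulerian binomial posets of rank 2m+2, m ≥ 2, with atom functions A and A' agreeing for n ≤ 2m. Then (1/A(2m+1))·(1 − 1/A(2m+2)) = (1/A'(2m+1))·(1 − 1/A'(2m+2)). -/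
open scoped Classical

/-!
Counting maximal chains through the elements of rank `k` shows that a binomial poset of rank `n`
has `B n / (B k * B (n - k))` elements of rank `k`, so its Euler–Poincaré relation reads
`∑ₖ (-1)^k / (B k * B (n - k)) = 0`. For `n = 2m + 2`, and since `B 0 = B 1 = 1`, the terms
`k = 0, 1, n - 1, n` add up to `2 (1 / B (2m+2) - 1 / B (2m+1))`, while every other term only
involves `B 2, …, B (2m)`, which the agreeing atom functions force to be the same for both posets.
Hence `1 / B (2m+1) - 1 / B (2m+2)` is the same for both, and the claim is this times `B (2m)`.
-/

open Finset

namespace IsSatChain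

variable {α : Type*} [PartialOrder α] {rk : α → ℕ} {x y z : α} {l l₁ l₂ : List α}

theorem singleton (x : α) : IsSatChain x x [x] :=
  ⟨List.isChain_singleton x, rfl, rfl⟩

theorem cons_s5 (hxz : x ⋖ z) (h : IsSatChain z y l) : IsSatChain x y (x :: l) := by
  obtain ⟨t, rfl⟩ := List.head?_eq_some_iff.1 h.2.1
  exact ⟨List.isChain_cons_cons.2 ⟨hxz, h.1⟩, rfl, by simpa using h.2.2⟩

theorem ne_nil (h : IsSatChain x y l) : l ≠ [] := by
  rintro rfl
  simp [IsSatChain] at h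

theorem pairwise_lt (h : IsSatChain x y l) : l.Pairwise (· < ·) :=
  List.isChain_iff_pairwise.1 (h.1.imp fun _ _ => CovBy.lt)

theorem rk_getElem (hrk : ∀ a b : α, a ⋖ b → rk b = rk a + 1) (h : IsSatChain x y l) :
    ∀ i (hi : i < l.length), rk l[i] = rk x + i
  | 0, hi => by
    have := h.2.1
    rw [List.head?_eq_getElem?, List.getElem?_eq_getElem hi, Option.some_inj] at this
    rw [this, add_zero]
  | i + 1, hi => by
    rw [hrk _ _ (List.isChain_iff_getElem.1 h.1 i hi), h.rk_getElem hrk i (by omega), add_assoc]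

theorem rk_add_length (hrk : ∀ a b : α, a ⋖ b → rk b = rk a + 1) (h : IsSatChain x y l) :
    rk x + l.length = rk y + 1 := by
  have hpos : 0 < l.length := List.length_pos_iff.2 h.ne_nil
  have hlast := h.2.2
  rw [List.getLast?_eq_getElem?, List.getElem?_eq_getElem (by omega), Option.some_inj] at hlast
  have := h.rk_getElem hrk (l.length - 1) (by omega)
  rw [hlast] at this
  omega

theorem take (h : IsSatChain x y l) {k : ℕ} (hk : k < l.length) :
    IsSatChain x l[k] (l.take (k + 1)) := by
  refine ⟨h.1.take _, ?_, ?_⟩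
  · simpa [List.head?_take] using h.2.1
  · simp [List.getLast?_take, List.getElem?_eq_getElem hk]

theorem drop (h : IsSatChain x y l) {k : ℕ} (hk : k < l.length) :
    IsSatChain l[k] y (l.drop k) := by
  refine ⟨h.1.drop _, ?_, ?_⟩
  · simp [List.head?_drop, List.getElem?_eq_getElem hk]
  · simpa [List.getLast?_drop, hk] using h.2.2

theorem append_tail (h₁ : IsSatChain x z l₁) (h₂ : IsSatChain z y l₂) :
    IsSatChain x y (l₁ ++ l₂.tail) := by
  obtain ⟨A, rfl⟩ := List.getLast?_eq_some_iff.1 h₁.2.2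
  obtain ⟨t, rfl⟩ := List.head?_eq_some_iff.1 h₂.2.1
  refine ⟨h₁.1.append_overlap h₂.1 (List.cons_ne_nil z []), ?_, ?_⟩
  · simpa using h₁.2.1
  · simpa using h₂.2.2

end IsSatChain

section ChainCount

variable {α : Type*} [PartialOrder α] {rk : α → ℕ} {x y : α}

theorem exists_isSatChain [Finite α] (h : x ≤ y) : ∃ l, IsSatChain x y l := by
  induction x using WellFoundedGT.induction with
  | _ x ih =>
    rcases h.eq_or_lt with rfl | hxy
    · exact ⟨[x], IsSatChain.singleton x⟩
    · obtain ⟨z, hxz, hzy⟩ := exists_covBy_le_of_lt hxy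
      obtain ⟨l, hl⟩ := ih z hxz.lt hzy
      exact ⟨x :: l, hl.cons_s5 hxz⟩

theorem rk_le_of_le [Finite α] (hrk : ∀ a b : α, a ⋖ b → rk b = rk a + 1) (h : x ≤ y) :
    rk x ≤ rk y := by
  obtain ⟨l, hl⟩ := exists_isSatChain h
  have := hl.rk_add_length hrk
  have := List.length_pos_iff.2 hl.ne_nil
  omega

theorem finite_isSatChain [Finite α] (x y : α) : Finite {l : List α // IsSatChain x y l} := by
  have := Fintype.ofFinite α
  exact ((List.finite_length_le α (Fintype.card α)).subset
    fun l (hl : IsSatChain x y l) => hl.pairwise_lt.nodup.length_le_card).to_subtype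

theorem chainCount_pos [Finite α] (h : x ≤ y) : 0 < chainCount x y := by
  have := finite_isSatChain x y
  obtain ⟨l, hl⟩ := exists_isSatChain h
  have : Nonempty {l : List α // IsSatChain x y l} := ⟨⟨l, hl⟩⟩
  exact Nat.card_pos

theorem chainCount_eq_one {l₀ : List α} (h₀ : IsSatChain x y l₀)
    (huniq : ∀ l, IsSatChain x y l → l = l₀) : chainCount x y = 1 :=
  Nat.card_eq_one_iff_unique.2
    ⟨⟨fun l l' => Subtype.ext ((huniq _ l.2).trans (huniq _ l'.2).symm)⟩, ⟨⟨l₀, h₀⟩⟩⟩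

theorem chainCount_self (hrk : ∀ a b : α, a ⋖ b → rk b = rk a + 1) (x : α) :
    chainCount x x = 1 := by
  refine chainCount_eq_one (IsSatChain.singleton x) fun l hl => ?_
  obtain ⟨a, rfl⟩ :=
    List.length_eq_one_iff.1 (by have := hl.rk_add_length hrk; omega : l.length = 1)
  simpa using hl.2

theorem chainCount_of_covBy (hrk : ∀ a b : α, a ⋖ b → rk b = rk a + 1) (hxy : x ⋖ y) :
    chainCount x y = 1 := by
  refine chainCount_eq_one ((IsSatChain.singleton y).cons_s5 hxy) fun l hl => ?_
  obtain ⟨a, b, rfl⟩ := List.length_eq_two.1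
    (by have := hl.rk_add_length hrk; have := hrk x y hxy; omega : l.length = 2)
  simpa using hl.2

end ChainCount

section Split

variable {α : Type*} [PartialOrder α] {rk : α → ℕ} {x y z : α} {k : ℕ}

theorem IsSatChain.getElem?_append {l₁ : List α} (h₁ : IsSatChain x z l₁)
    (hlen : l₁.length = k + 1) (l₂ : List α) : (l₁ ++ l₂)[k]? = some z := by
  obtain ⟨A, rfl⟩ := List.getLast?_eq_some_iff.1 h₁.2.2
  simp_all

theorem IsSatChain.drop_append_tail {l₁ l₂ : List α} (h₁ : IsSatChain x z l₁)
    (h₂ : IsSatChain z y l₂) (hlen : l₁.length = k + 1) : (l₁ ++ l₂.tail).drop k = l₂ := by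
  obtain ⟨A, rfl⟩ := List.getLast?_eq_some_iff.1 h₁.2.2
  obtain ⟨t, rfl⟩ := List.head?_eq_some_iff.1 h₂.2.1
  simp_all

def satChainSplitEquiv (hrk : ∀ a b : α, a ⋖ b → rk b = rk a + 1) (hz : rk z = rk x + k) :
    {l : {l : List α // IsSatChain x y l} // l.1[k]? = some z} ≃
      {l : List α // IsSatChain x z l} × {l : List α // IsSatChain z y l} where
  toFun l :=
    (⟨l.1.1.take (k + 1), by
      obtain ⟨hk, hz⟩ := List.getElem?_eq_some_iff.1 l.2
      simpa only [hz] using l.1.2.take hk⟩,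
     ⟨l.1.1.drop k, by
      obtain ⟨hk, hz⟩ := List.getElem?_eq_some_iff.1 l.2
      simpa only [hz] using l.1.2.drop hk⟩)
  invFun p :=
    have hlen : p.1.1.length = k + 1 := by have := p.1.2.rk_add_length hrk; omega
    ⟨⟨p.1.1 ++ p.2.1.tail, p.1.2.append_tail p.2.2⟩, p.1.2.getElem?_append hlen _⟩
  left_inv l := by
    ext1; ext1
    simp
  right_inv p := by
    have hlen : p.1.1.length = k + 1 := by have := p.1.2.rk_add_length hrk; omega
    ext1
    · exact Subtype.ext (List.take_left' hlen)
    · exact Subtype.ext (p.1.2.drop_append_tail p.2.2 hlen)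

theorem chainCount_eq_sum_mul [Fintype α] (hrk : ∀ a b : α, a ⋖ b → rk b = rk a + 1)
    (hk : rk x + k ≤ rk y) :
    chainCount x y = ∑ z with rk z = rk x + k, chainCount x z * chainCount z y := by
  have := finite_isSatChain x y
  have hlen (l : {l : List α // IsSatChain x y l}) : k < l.1.length := by
    have := l.2.rk_add_length hrk
    omega
  let f (l : {l : List α // IsSatChain x y l}) : α := l.1[k]'(hlen l)
  have hfiber (z : α) (hz : rk z = rk x + k) :
      Nat.card {l // f l = z} = chainCount x z * chainCount z y := by
    rw [chainCount, chainCount, ← Nat.card_prod]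
    refine Nat.card_congr ((Equiv.subtypeEquivRight fun l => ?_).trans (satChainSplitEquiv hrk hz))
    simp [f, List.getElem?_eq_getElem (hlen l)]
  calc chainCount x y = ∑ z, Nat.card {l // f l = z} := by
        rw [chainCount, ← Nat.card_sigma, Nat.card_congr (Equiv.sigmaFiberEquiv f)]
    _ = ∑ z with rk z = rk x + k, Nat.card {l // f l = z} := by
        refine (sum_filter_of_ne fun z _ hz => ?_).symm
        obtain ⟨⟨l, rfl⟩⟩ := (Nat.card_ne_zero.1 hz).1
        exact l.2.rk_getElem hrk k (hlen l)
    _ = _ := sum_congr rfl fun z hz => hfiber z (mem_filter.1 hz).2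

end Split

theorem IsRankFunction.bot_lt_top {α : Type*} [PartialOrder α] [BoundedOrder α] {rk : α → ℕ}
    (hrk : IsRankFunction rk) (hpos : 0 < rk ⊤) : (⊥ : α) < ⊤ :=
  bot_lt_iff_ne_bot.2 fun h => by simp [h, hrk.1] at hpos

namespace IsBinomial

variable {α : Type*} [PartialOrder α] {rk : α → ℕ} {B : ℕ → ℕ}

theorem apply_zero [OrderBot α] (hrk : IsRankFunction rk) (hB : IsBinomial rk B) : B 0 = 1 := by
  simpa using (hB ⊥ ⊥ le_rfl).symm.trans (chainCount_self hrk.2 ⊥)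

theorem apply_one [Finite α] [BoundedOrder α] (hrk : IsRankFunction rk) (hB : IsBinomial rk B)
    (hpos : 0 < rk ⊤) : B 1 = 1 := by
  obtain ⟨a, ha, -⟩ := exists_covBy_le_of_lt (hrk.bot_lt_top hpos)
  simpa [hrk.2 _ _ ha, hrk.1] using (hB ⊥ a bot_le).symm.trans (chainCount_of_covBy hrk.2 ha)

theorem card_rk_eq_mul [Fintype α] [BoundedOrder α] (hrk : IsRankFunction rk)
    (hB : IsBinomial rk B) {k : ℕ} (hk : k ≤ rk ⊤) :
    #{z : α | rk z = k} * (B k * B (rk ⊤ - k)) = B (rk ⊤) := by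
  have hsplit :=
    chainCount_eq_sum_mul (x := (⊥ : α)) (y := ⊤) (k := k) hrk.2 (by rwa [hrk.1, zero_add])
  simp only [hB _ _ bot_le, hB _ _ le_top, hrk.1, zero_add, Nat.sub_zero] at hsplit
  rw [hsplit, sum_congr rfl fun z hz => by rw [(mem_filter.1 hz).2], sum_const, smul_eq_mul]

theorem pos [Fintype α] [BoundedOrder α] (hrk : IsRankFunction rk) (hB : IsBinomial rk B)
    {k : ℕ} (hk : k ≤ rk ⊤) : 0 < B k := by
  have htop : 0 < B (rk ⊤) := by
    simpa [hB ⊥ ⊤ bot_le, hrk.1] using chainCount_pos (bot_le : (⊥ : α) ≤ ⊤)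
  rw [← hB.card_rk_eq_mul hrk hk] at htop
  exact Nat.pos_of_ne_zero fun h => by simp [h] at htop

end IsBinomial

theorem IsEulerian.sum_neg_one_pow_rk {α R : Type*} [Fintype α] [PartialOrder α]
    [BoundedOrder α] [Ring R] {rk : α → ℕ} (hE : IsEulerian rk) (hbot : (⊥ : α) < ⊤) :
    ∑ z : α, (-1 : R) ^ rk z = 0 := by
  have hEP := hE ⊥ ⊤ hbot
  simp only [EulerPoincare, bot_le, le_top, true_and] at hEP
  simp only [neg_one_pow_eq_ite, sum_ite, sum_const, hEP, nsmul_eq_mul, mul_one, mul_neg,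
    add_neg_cancel]

theorem IsEulerian.sum_range_neg_one_pow_div_eq_zero {α : Type*} [Fintype α] [PartialOrder α]
    [BoundedOrder α] {rk : α → ℕ} {B : ℕ → ℕ} (hrk : IsRankFunction rk) (hB : IsBinomial rk B)
    (hE : IsEulerian rk) (hpos : 0 < rk ⊤) :
    ∑ k ∈ range (rk ⊤ + 1), (-1 : ℚ) ^ k / (B k * B (rk ⊤ - k)) = 0 := by
  have hBtop : (B (rk ⊤) : ℚ) ≠ 0 := by exact_mod_cast (hB.pos hrk le_rfl).ne'
  calc ∑ k ∈ range (rk ⊤ + 1), (-1 : ℚ) ^ k / (B k * B (rk ⊤ - k))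
      = ∑ k ∈ range (rk ⊤ + 1), (-1 : ℚ) ^ k * #{z : α | rk z = k} / B (rk ⊤) := by
        refine sum_congr rfl fun k hk => ?_
        have hk : k ≤ rk ⊤ := Nat.lt_succ_iff.1 (mem_range.1 hk)
        have hcard : (#{z : α | rk z = k} : ℚ) * (B k * B (rk ⊤ - k)) = B (rk ⊤) := by
          exact_mod_cast hB.card_rk_eq_mul hrk hk
        have : (B k : ℚ) * B (rk ⊤ - k) ≠ 0 := by
          simp [(hB.pos hrk hk).ne', (hB.pos hrk (Nat.sub_le _ k)).ne']
        rw [eq_div_iff hBtop, ← hcard, mul_comm (#{z : α | rk z = k} : ℚ), ← mul_assoc,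
          div_mul_cancel₀ _ this]
    _ = (∑ z : α, (-1 : ℚ) ^ rk z) / B (rk ⊤) := by
        rw [← sum_div, ← sum_fiberwise_of_maps_to (g := rk) (t := range (rk ⊤ + 1))
          fun z _ => mem_range.2 (Nat.lt_succ_of_le (rk_le_of_le hrk.2 le_top))]
        refine congrArg (· / _) (sum_congr rfl fun k _ => ?_)
        rw [sum_congr rfl fun z hz => by rw [(mem_filter.1 hz).2], sum_const, nsmul_eq_mul,
          mul_comm]
    _ = 0 := by rw [hE.sum_neg_one_pow_rk (hrk.bot_lt_top hpos), zero_div]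

theorem sum_range_neg_one_pow_div_eq {K : Type*} [Field K] {b : ℕ → K} {m : ℕ} (hm : 1 ≤ m)
    (h0 : b 0 = 1) (h1 : b 1 = 1) :
    ∑ k ∈ range (2 * m + 3), (-1 : K) ^ k / (b k * b (2 * m + 2 - k))
      = 2 * (1 / b (2 * m + 2) - 1 / b (2 * m + 1))
        + ∑ k ∈ Ico 2 (2 * m + 1), (-1 : K) ^ k / (b k * b (2 * m + 2 - k)) := by
  rw [sum_range_succ, sum_range_succ, ← sum_range_add_sum_Ico _ (by omega : 2 ≤ 2 * m + 1)]
  simp only [sum_range_succ, range_zero, sum_empty, Nat.sub_zero,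
    show 2 * m + 2 - 1 = 2 * m + 1 by omega, show 2 * m + 2 - (2 * m + 1) = 1 by omega,
    Nat.sub_self, h0, h1, pow_succ, pow_mul]
  ring

theorem eq_of_div_pred_eq {K : Type*} [DivisionRing K] {b b' : ℕ → K} {N : ℕ}
    (hb : ∀ k < N, b k ≠ 0) (h0 : b 0 = b' 0)
    (h : ∀ n ≤ N, b n / b (n - 1) = b' n / b' (n - 1)) : ∀ k ≤ N, b k = b' k
  | 0, _ => h0
  | k + 1, hk => by
    have ih := eq_of_div_pred_eq hb h0 h k (by omega)
    have := h (k + 1) hk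
    rwa [Nat.add_sub_cancel, ← ih, div_left_inj' (hb k (by omega))] at this

theorem div_mul_one_sub_div {K : Type*} [Field K] {c d e : K} (hd : d ≠ 0) :
    c / d * (1 - d / e) = c * (1 / d - 1 / e) := by
  field_simp

/-- Two Eulerian binomial posets of rank `2m + 2`, `m ≥ 2`, whose atom
functions `A n = B n / B (n - 1)` agree for `n ≤ 2m` satisfy
`(1/A(2m+1)) (1 - 1/A(2m+2)) = (1/A'(2m+1)) (1 - 1/A'(2m+2))`. -/
theorem statement5 {α β : Type*} [Fintype α] [PartialOrder α] [BoundedOrder α]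
    [Fintype β] [PartialOrder β] [BoundedOrder β]
    (rk : α → ℕ) (rk' : β → ℕ) (B B' : ℕ → ℕ) (m : ℕ) (hm : 2 ≤ m)
    (hrk : IsRankFunction rk) (hrk' : IsRankFunction rk')
    (hB : IsBinomial rk B) (hB' : IsBinomial rk' B')
    (hE : IsEulerian rk) (hE' : IsEulerian rk')
    (hrank : rk ⊤ = 2 * m + 2) (hrank' : rk' ⊤ = 2 * m + 2)
    (hagree : ∀ n ≤ 2 * m, (B n : ℚ) / (B (n - 1) : ℚ) = (B' n : ℚ) / (B' (n - 1) : ℚ)) :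
    ((B (2 * m) : ℚ) / (B (2 * m + 1) : ℚ)) *
        (1 - (B (2 * m + 1) : ℚ) / (B (2 * m + 2) : ℚ))
      = ((B' (2 * m) : ℚ) / (B' (2 * m + 1) : ℚ)) *
        (1 - (B' (2 * m + 1) : ℚ) / (B' (2 * m + 2) : ℚ)) := by
  have hpos : 0 < rk ⊤ := by omega
  have hpos' : 0 < rk' ⊤ := by omega
  have hBne {k : ℕ} (hk : k ≤ 2 * m + 1) : (B k : ℚ) ≠ 0 :=
    Nat.cast_ne_zero.2 (hB.pos hrk (by omega)).ne'
  have hBB' : ∀ k ≤ 2 * m, (B k : ℚ) = B' k :=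
    eq_of_div_pred_eq (fun k hk => hBne (by omega))
      (by rw [hB.apply_zero hrk, hB'.apply_zero hrk']) hagree
  have hsum := hE.sum_range_neg_one_pow_div_eq_zero hrk hB hpos
  have hsum' := hE'.sum_range_neg_one_pow_div_eq_zero hrk' hB' hpos'
  rw [hrank, sum_range_neg_one_pow_div_eq (by omega) (by simp [hB.apply_zero hrk])
    (by simp [hB.apply_one hrk hpos])] at hsum
  rw [hrank', sum_range_neg_one_pow_div_eq (by omega) (by simp [hB'.apply_zero hrk'])
    (by simp [hB'.apply_one hrk' hpos'])] at hsum'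
  have hmid : ∑ k ∈ Ico 2 (2 * m + 1), (-1 : ℚ) ^ k / (B k * B (2 * m + 2 - k))
      = ∑ k ∈ Ico 2 (2 * m + 1), (-1 : ℚ) ^ k / (B' k * B' (2 * m + 2 - k)) :=
    sum_congr rfl fun k hk => by
      rw [mem_Ico] at hk
      rw [hBB' k (by omega), hBB' (2 * m + 2 - k) (by omega)]
  have hinv : 1 / (B (2 * m + 1) : ℚ) - 1 / B (2 * m + 2)
      = 1 / (B' (2 * m + 1) : ℚ) - 1 / B' (2 * m + 2) := by
    linarith
  have hB'ne : (B' (2 * m + 1) : ℚ) ≠ 0 := Nat.cast_ne_zero.2 (hB'.pos hrk' (by omega)).ne'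
  rw [div_mul_one_sub_div (hBne le_rfl), div_mul_one_sub_div hB'ne, hBB' (2 * m) le_rfl, hinv]
end
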